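/- arXiv:2111.14986 — 8 statements merged into one kernel-verified Lean document; each statement's English description precedes it below -/
import Mathlib

section
/- Let k be a natural number and let G be a finite simple graph that is k-degenerate. Then the vertex set of G can be partitioned into ⌈(k+1)/2⌉ parts, each of which induces a forest in G. -/
open SimpleGraph

/-- A simple graph is `k`-degenerate if every nonempty (induced) subgraph has a
vertex of degree at most `k`. -/
def Degenerate {V : Type*} (G : SimpleGraph V) (k : ℕ) : Prop :=
  ∀ s : Set V, s.Nonempty → ∃ v ∈ s, (s ∩ G.neighborSet v).ncard ≤ k

private lemma getVert_support_get {V : Type*} {G : SimpleGraph V} {u v : V}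
    (p : G.Walk u v) {n : ℕ} (hn : n ≤ p.length) :
    p.support[n]? = some (p.getVert n) := by
  induction p generalizing n with
  | nil =>
    simp at hn
    subst hn
    simp [SimpleGraph.Walk.getVert]
  | cons h q ih =>
    cases n with
    | zero => simp [SimpleGraph.Walk.getVert]
    | succ m =>
      simp only [SimpleGraph.Walk.support_cons, SimpleGraph.Walk.getVert_cons_succ,
        List.getElem?_cons_succ]
      exact ih (by simpa [SimpleGraph.Walk.length_cons, Nat.succ_le_succ_iff] using hn)

/-- On a cycle, every vertex of the support has two distinct neighbors in the support. -/
private lemma cycle_two_nbrs {V : Type*} {G : SimpleGraph V} {a : V} {p : G.Walk a a}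
    (hp : p.IsCycle) {v : V} (hv : v ∈ p.support) :
    ∃ w₁ w₂, w₁ ∈ p.support ∧ w₂ ∈ p.support ∧ w₁ ≠ w₂ ∧ G.Adj v w₁ ∧ G.Adj v w₂ := by
  classical
  set q := p.rotate v hv with hq
  have hqc : q.IsCycle := hp.rotate hv
  have hperm : p.support.tail ~r q.support.tail := (SimpleGraph.Walk.support_rotate p v hv).symm
  have hmem : ∀ x, x ∈ q.support → x ∈ p.support := by
    intro x hx
    rw [q.support_eq_cons, List.mem_cons] at hx
    rcases hx with rfl | hx
    · exact hv
    · have : x ∈ p.support.tail := hperm.perm.mem_iff.mpr hx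
      exact List.mem_of_mem_tail this
  have hlen3 : 3 ≤ q.length := hqc.three_le_length
  -- two neighbors: getVert 1 and getVert (length - 1)
  refine ⟨q.getVert 1, q.getVert (q.length - 1), ?_, ?_, ?_, ?_, ?_⟩
  · exact hmem _ (SimpleGraph.Walk.mem_support_iff_exists_getVert.mpr ⟨1, rfl, by omega⟩)
  · exact hmem _ (SimpleGraph.Walk.mem_support_iff_exists_getVert.mpr ⟨q.length - 1, rfl, by omega⟩)
  · -- distinct, by Nodup of the tail of the support
    intro heq
    have hnodup : q.support.tail.Nodup := hqc.2
    have h1 : q.support.tail[0]? = some (q.getVert 1) := by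
      have := getVert_support_get q (show 1 ≤ q.length by omega)
      cases hs : q.support with
      | nil => simp [hs] at this
      | cons b l => rw [hs] at this; simpa using this
    have h2 : q.support.tail[q.length - 2]? = some (q.getVert (q.length - 1)) := by
      have := getVert_support_get q (show q.length - 1 ≤ q.length by omega)
      cases hs : q.support with
      | nil => simp [hs] at this
      | cons b l =>
        rw [hs] at this
        rw [show q.length - 1 = (q.length - 2) + 1 by omega] at this ⊢
        simpa using this
    have hl : q.support.tail.length = q.length := by
      have := SimpleGraph.Walk.length_support q
      have ht : q.support.tail.length = q.support.length - 1 := by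
        cases q.support <;> simp
      omega
    have h0 : (0 : ℕ) < q.support.tail.length := by omega
    rw [show q.length - 1 = (q.length - 2) + 1 by omega] at heq
    have h' : q.support.tail[0]? = q.support.tail[q.length - 2]? := by
      rw [h1, h2, heq, show q.length - 2 + 1 = q.length - 1 by omega]
    have := (List.getElem?_inj h0 hnodup).mp h'
    omega
  · have := q.adj_getVert_succ (by omega : 0 < q.length)
    simpa using this
  · have := q.adj_getVert_succ (show q.length - 1 < q.length by omega)
    rw [show q.length - 1 + 1 = q.length by omega, SimpleGraph.Walk.getVert_length] at this
    exact this.symm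

/-- If every nonempty subset of `s` has a vertex with at most one neighbor inside it,
then the induced graph on `s` is acyclic. -/
private lemma acyclic_of_one_degenerate {V : Type*} [Fintype V] (G : SimpleGraph V)
    (s : Set V)
    (h : ∀ t ⊆ s, t.Nonempty → ∃ v ∈ t, (t ∩ G.neighborSet v).ncard ≤ 1) :
    (G.induce s).IsAcyclic := by
  classical
  intro u p hp
  let f : G.induce s →g G := ⟨Subtype.val, fun {a b} hab => hab⟩
  have hfinj : Function.Injective f := Subtype.val_injective
  have hpc : (p.map f).IsCycle := hp.map hfinj
  set t : Set V := {x | x ∈ (p.map f).support} with ht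
  have hts : t ⊆ s := by
    rintro x hx
    rw [ht, Set.mem_setOf_eq, SimpleGraph.Walk.support_map, List.mem_map] at hx
    obtain ⟨y, _, rfl⟩ := hx
    exact y.2
  have htne : t.Nonempty := ⟨f u, SimpleGraph.Walk.start_mem_support _⟩
  obtain ⟨v, hvt, hv1⟩ := h t hts htne
  obtain ⟨w₁, w₂, hw₁, hw₂, hne, ha₁, ha₂⟩ := cycle_two_nbrs hpc hvt
  have h2 : 1 < (t ∩ G.neighborSet v).ncard := by
    apply Set.one_lt_ncard_iff (Set.toFinite _) |>.mpr
    exact ⟨w₁, w₂, ⟨hw₁, ha₁⟩, ⟨hw₂, ha₂⟩, hne⟩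
  omega

private lemma key_induction {V : Type*} [Fintype V] (k : ℕ) (G : SimpleGraph V)
    (hdeg : Degenerate G k) :
    ∀ s : Finset V, ∃ c : V → Fin ((k + 2) / 2), ∀ i : Fin ((k + 2) / 2),
      ∀ t ⊆ {v | v ∈ s ∧ c v = i}, t.Nonempty → ∃ v ∈ t, (t ∩ G.neighborSet v).ncard ≤ 1 := by
  classical
  intro s
  induction s using Finset.strongInduction with
  | _ s ih =>
    rcases s.eq_empty_or_nonempty with rfl | hne
    · refine ⟨fun _ => ⟨0, by omega⟩, fun i t hts htne => absurd htne ?_⟩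
      obtain ⟨x, hx⟩ := htne
      have := hts hx
      simp at this
    · obtain ⟨v, hvs, hvk⟩ := hdeg ↑s (by exact_mod_cast hne.to_set)
      obtain ⟨c, hc⟩ := ih (s.erase v) (Finset.erase_ssubset hvs)
      -- the neighbors of v within s.erase v
      set N : Set V := (↑(s.erase v) : Set V) ∩ G.neighborSet v with hN
      have hNk : N.ncard ≤ k := by
        refine le_trans (Set.ncard_le_ncard ?_ (Set.toFinite _)) hvk
        intro x hx
        exact ⟨by have := hx.1; simp only [Finset.coe_erase, Set.mem_diff, Finset.mem_coe] at this; exact this.1, hx.2⟩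
      -- pigeonhole: some color has at most one neighbor of v
      have hpigeon : ∃ i : Fin ((k + 2) / 2), (N ∩ {x | c x = i}).ncard ≤ 1 := by
        by_contra hcon
        push_neg at hcon
        have hsum : ∀ i : Fin ((k + 2) / 2), 2 ≤ (N ∩ {x | c x = i}).ncard :=
          fun i => hcon i
        have hcard : N.ncard = ∑ i : Fin ((k + 2) / 2), (N ∩ {x | c x = i}).ncard := by
          rw [Set.ncard_eq_toFinset_card' N]
          rw [Finset.card_eq_sum_card_fiberwise
            (f := c) (t := Finset.univ) (fun x _ => Finset.mem_univ _)]
          congr 1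
          funext i
          rw [Set.ncard_eq_toFinset_card']
          congr 1
          ext x
          simp [hN]
          tauto
        have h2n : 2 * ((k + 2) / 2) ≤ N.ncard := by
          rw [hcard]
          calc 2 * ((k + 2) / 2) = ∑ _i : Fin ((k + 2) / 2), 2 := by
                simp [Finset.sum_const, mul_comm]
            _ ≤ _ := Finset.sum_le_sum (fun i _ => hsum i)
        omega
      obtain ⟨i, hi⟩ := hpigeon
      refine ⟨Function.update c v i, fun j t hts htne => ?_⟩
      by_cases hvt : v ∈ t
      · -- v itself works
        refine ⟨v, hvt, ?_⟩
        refine le_trans (Set.ncard_le_ncard ?_ (Set.toFinite _)) hi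
        intro x ⟨hxt, hxn⟩
        have hxv : x ≠ v := fun h => by subst h; exact G.irrefl hxn
        have hx := hts hxt
        obtain ⟨hxs, hxc⟩ := hx
        rw [Function.update_of_ne hxv] at hxc
        have hji : j = i := by
          have hvc := hts hvt
          have : Function.update c v i v = j := hvc.2
          rw [Function.update_self] at this
          exact this.symm
        exact ⟨⟨by simp [Finset.mem_erase, hxv, hxs], hxn⟩, by rw [Set.mem_setOf_eq, hxc, hji]⟩
      · -- t avoids v, use the inductive coloring
        refine hc j t ?_ htne
        intro x hxt
        have hx := hts hxt
        have hxv : x ≠ v := fun h => hvt (h ▸ hxt)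
        obtain ⟨hxs, hxc⟩ := hx
        rw [Function.update_of_ne hxv] at hxc
        exact ⟨Finset.mem_erase.mpr ⟨hxv, hxs⟩, hxc⟩

/-- The vertex set of a `k`-degenerate graph can be partitioned into
`⌈(k+1)/2⌉ = (k+2)/2` parts each inducing a forest. -/
theorem stmt1 {V : Type*} [Fintype V] (k : ℕ) (G : SimpleGraph V)
    (hdeg : Degenerate G k) :
    ∃ c : V → Fin ((k + 2) / 2), ∀ i, (G.induce {v | c v = i}).IsAcyclic := by
  classical
  obtain ⟨c, hc⟩ := key_induction k G hdeg Finset.univ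
  refine ⟨c, fun i => ?_⟩
  apply acyclic_of_one_degenerate
  intro t hts htne
  refine hc i t ?_ htne
  intro x hx
  exact ⟨Finset.mem_univ x, hts hx⟩
end

section
/- For every even integer k ≥ 2 there exists a finite simple graph G that is k-degenerate, has exactly k(k+2)/2 + 1 vertices, and whose minimum feedback vertex set has size exactly k²/2. -/
/-- `fvsNum G` is the minimum size of a feedback vertex set of `G`. -/
noncomputable def fvsNum {V : Type*} [Fintype V] (G : SimpleGraph V) : ℕ :=
  sInf {n | ∃ F : Set V, (G.induce Fᶜ).IsAcyclic ∧ F.ncard = n}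

open SimpleGraph


section Generic
variable {α : Type*} {H : SimpleGraph α}

theorem not_acyclic_of_triangle {a b c : α} (hab : H.Adj a b) (hbc : H.Adj b c)
    (hca : H.Adj c a) : ¬ H.IsAcyclic := by
  intro hac
  have h1 := hab.ne; have h2 := hbc.ne; have h3 := hca.ne
  refine hac (.cons hab (.cons hbc (.cons hca .nil))) ?_
  rw [SimpleGraph.Walk.isCycle_def]
  refine ⟨?_, by simp, ?_⟩
  · rw [SimpleGraph.Walk.isTrail_def]
    simp only [Walk.edges_cons, Walk.edges_nil, List.nodup_cons, List.mem_cons,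
      List.not_mem_nil, or_false, List.mem_singleton, List.nodup_nil, and_true]
    simp only [Sym2.eq_iff]
    tauto
  · simp only [Walk.support_cons, Walk.support_nil, List.tail_cons, List.nodup_cons,
      List.mem_cons, List.not_mem_nil, or_false, List.mem_singleton, List.nodup_nil, and_true]
    exact ⟨by tauto, by tauto⟩

theorem not_acyclic_of_c4 {a b c d : α} (hab : H.Adj a b) (hbc : H.Adj b c)
    (hcd : H.Adj c d) (hda : H.Adj d a) (hac : a ≠ c) (hbd : b ≠ d) : ¬ H.IsAcyclic := by
  intro hacyc
  have h1 := hab.ne; have h2 := hbc.ne; have h3 := hcd.ne; have h4 := hda.ne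
  refine hacyc (.cons hab (.cons hbc (.cons hcd (.cons hda .nil)))) ?_
  rw [SimpleGraph.Walk.isCycle_def]
  refine ⟨?_, by simp, ?_⟩
  · rw [SimpleGraph.Walk.isTrail_def]
    simp only [Walk.edges_cons, Walk.edges_nil, List.nodup_cons, List.mem_cons,
      List.not_mem_nil, or_false, List.mem_singleton, List.nodup_nil, and_true]
    simp only [Sym2.eq_iff]
    tauto
  · simp only [Walk.support_cons, Walk.support_nil, List.tail_cons, List.nodup_cons,
      List.mem_cons, List.not_mem_nil, or_false, List.mem_singleton, List.nodup_nil, and_true]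
    refine ⟨by tauto, by tauto, by tauto⟩

theorem acyclic_of_deg_le_one (h : ∀ a b c : α, H.Adj a b → H.Adj a c → b = c) :
    H.IsAcyclic := by
  intro v c hc
  have h3 := hc.three_le_length
  cases c with
  | nil => simp at h3
  | cons hvb p =>
    cases p with
    | nil => simp at h3
    | cons hbd q =>
      rename_i b d
      have hvd : v = d := h b v d hvb.symm hbd
      subst hvd
      have hq : q ≠ SimpleGraph.Walk.nil := by
        intro hq; subst hq; simp [SimpleGraph.Walk.length_cons] at h3
      rw [SimpleGraph.Walk.isCycle_def] at hc
      have hnd := hc.2.2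
      simp only [Walk.support_cons, List.tail_cons] at hnd
      cases q with
      | nil => exact hq rfl
      | cons hve r =>
        rename_i e
        simp only [Walk.support_cons, List.nodup_cons, List.mem_cons] at hnd
        exact hnd.2.1 (SimpleGraph.Walk.end_mem_support r)

end Generic

abbrev Vt (t : ℕ) := Fin (t+1) ⊕ (Fin t × (Fin t ⊕ Fin (t+1)))

def adjt (t : ℕ) : Vt t → Vt t → Prop
  | .inl h, .inl h' => h ≠ h'
  | .inl h, .inr (i, .inl _) => (h : ℕ) = (i : ℕ)
  | .inl h, .inr (i, .inr _) => (i : ℕ) < (h : ℕ)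
  | .inr (i, .inl _), .inl h => (h : ℕ) = (i : ℕ)
  | .inr (i, .inr _), .inl h => (i : ℕ) < (h : ℕ)
  | .inr (i, z), .inr (j, z') => i = j ∧ z ≠ z'

def Gt (t : ℕ) : SimpleGraph (Vt t) where
  Adj := adjt t
  symm := ⟨by
    rintro (h | ⟨i, a | b⟩) (h' | ⟨j, a' | b'⟩) <;> simp [adjt] <;> try tauto⟩
  loopless := ⟨by
    rintro (h | ⟨i, a | b⟩) <;> simp [adjt]⟩

def rho (t : ℕ) : Vt t → ℕ
  | .inl h => h * (2*t+2)
  | .inr (i, .inl a) => i * (2*t+2) + 1 + a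
  | .inr (i, .inr b) => i * (2*t+2) + 1 + t + b

theorem later_nbrs (t : ℕ) (w : Vt t) :
    ∃ T : Finset (Vt t), T.card ≤ 2*t ∧
      ∀ u, adjt t w u → rho t w ≤ rho t u → u ∈ T := by
  classical
  obtain (h | ⟨i, a | b⟩) := w
  · -- hub vertex
    set T1 : Finset (Vt t) :=
      (Finset.univ.filter (fun h' : Fin (t+1) => h < h')).image Sum.inl with hT1
    set T2 : Finset (Vt t) :=
      (if hlt : (h:ℕ) < t then
        (Finset.univ.image (fun a : Fin t => (Sum.inr (⟨(h:ℕ), hlt⟩, Sum.inl a) : Vt t)))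
       else ∅) with hT2
    refine ⟨T1 ∪ T2, ?_, ?_⟩
    · have c1 : T1.card ≤ t := by
        rw [hT1]
        refine le_trans (Finset.card_image_le) ?_
        have hsub : (Finset.univ.filter (fun h' : Fin (t+1) => h < h')) ⊆
            Finset.univ.erase h := by
          intro x hx
          simp only [Finset.mem_filter] at hx
          exact Finset.mem_erase.2 ⟨hx.2.ne', Finset.mem_univ _⟩
        refine le_trans (Finset.card_le_card hsub) ?_
        rw [Finset.card_erase_of_mem (Finset.mem_univ _)]
        simp
      have c2 : T2.card ≤ t := by
        rw [hT2]
        split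
        · refine le_trans (Finset.card_image_le) ?_; simp
        · simp
      have := Finset.card_union_le T1 T2
      omega
    · rintro (h' | ⟨j, a' | b'⟩) hadj hrho
      · simp only [adjt] at hadj
        simp only [rho] at hrho
        have hle : (h:ℕ) ≤ (h':ℕ) := le_of_mul_le_mul_right hrho (by omega)
        have hne : (h:ℕ) ≠ (h':ℕ) := fun hh => hadj (Fin.ext hh)
        refine Finset.mem_union_left _ ?_
        rw [hT1]
        simp only [Finset.mem_image, Finset.mem_filter, Finset.mem_univ, true_and]
        exact ⟨h', by rw [Fin.lt_def]; omega, rfl⟩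
      · simp only [adjt] at hadj
        have hlt : (h:ℕ) < t := hadj ▸ j.isLt
        refine Finset.mem_union_right _ ?_
        rw [hT2, dif_pos hlt]
        simp only [Finset.mem_image, Finset.mem_univ, true_and]
        refine ⟨a', ?_⟩
        have hij : (⟨(h:ℕ), hlt⟩ : Fin t) = j := Fin.ext hadj
        rw [hij]
      · exfalso
        simp only [adjt] at hadj
        simp only [rho] at hrho
        have e1 : ((j:ℕ)+1) * (2*t+2) ≤ (h:ℕ) * (2*t+2) :=
          Nat.mul_le_mul_right _ (by omega)
        have e2 : ((j:ℕ)+1) * (2*t+2) = (j:ℕ)*(2*t+2) + (2*t+2) := by ring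
        have hb := b'.isLt
        linarith
  · -- A vertex
    refine ⟨(Finset.univ.erase (Sum.inl a : Fin t ⊕ Fin (t+1))).image
      (fun z => (Sum.inr (i, z) : Vt t)), ?_, ?_⟩
    · rw [Finset.card_image_of_injective _ (by intro z z' hz; simpa using hz),
        Finset.card_erase_of_mem (Finset.mem_univ _)]
      simp
      omega
    · rintro (h' | ⟨j, a' | b'⟩) hadj hrho
      · exfalso
        simp only [adjt] at hadj
        simp only [rho] at hrho
        have heq : (h':ℕ) * (2*t+2) = (i:ℕ) * (2*t+2) := by rw [hadj]
        linarith
      · simp only [adjt] at hadj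
        obtain ⟨hij, hz⟩ := hadj
        subst hij
        simp only [Finset.mem_image, Finset.mem_erase, Finset.mem_univ, and_true]
        exact ⟨Sum.inl a', Ne.symm hz, rfl⟩
      · simp only [adjt] at hadj
        obtain ⟨hij, hz⟩ := hadj
        subst hij
        simp only [Finset.mem_image, Finset.mem_erase, Finset.mem_univ, and_true]
        exact ⟨Sum.inr b', Ne.symm hz, rfl⟩
  · -- B vertex
    set T1 : Finset (Vt t) :=
      ((Finset.univ.erase b).image (fun b' : Fin (t+1) => (Sum.inr (i, Sum.inr b') : Vt t)))
      with hT1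
    set T2 : Finset (Vt t) :=
      ((Finset.univ.filter (fun h' : Fin (t+1) => (i:ℕ) < (h':ℕ))).image Sum.inl) with hT2
    refine ⟨T1 ∪ T2, ?_, ?_⟩
    · have c1 : T1.card ≤ t := by
        rw [hT1]
        refine le_trans Finset.card_image_le ?_
        rw [Finset.card_erase_of_mem (Finset.mem_univ _)]
        simp
      have c2 : T2.card ≤ t := by
        rw [hT2]
        refine le_trans Finset.card_image_le ?_
        have hsub : (Finset.univ.filter (fun h' : Fin (t+1) => (i:ℕ) < (h':ℕ))) ⊆
            Finset.univ.erase (⟨(i:ℕ), by omega⟩ : Fin (t+1)) := by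
          intro x hx
          simp only [Finset.mem_filter] at hx
          refine Finset.mem_erase.2 ⟨?_, Finset.mem_univ _⟩
          intro heq
          rw [heq] at hx
          simp at hx
        refine le_trans (Finset.card_le_card hsub) ?_
        rw [Finset.card_erase_of_mem (Finset.mem_univ _)]
        simp
      have := Finset.card_union_le T1 T2
      omega
    · rintro (h' | ⟨j, a' | b'⟩) hadj hrho
      · simp only [adjt] at hadj
        refine Finset.mem_union_right _ ?_
        rw [hT2]
        simp only [Finset.mem_image, Finset.mem_filter, Finset.mem_univ, true_and]
        exact ⟨h', hadj, rfl⟩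
      · exfalso
        simp only [adjt] at hadj
        obtain ⟨hij, _⟩ := hadj
        subst hij
        simp only [rho] at hrho
        have := a'.isLt
        omega
      · simp only [adjt] at hadj
        obtain ⟨hij, hz⟩ := hadj
        subst hij
        refine Finset.mem_union_left _ ?_
        rw [hT1]
        simp only [Finset.mem_image, Finset.mem_erase, Finset.mem_univ, and_true]
        refine ⟨b', ?_, rfl⟩
        intro hh
        exact hz (by rw [hh])
-- the witness forest: one pair of B-vertices per part, plus hub vertex 0
def Wf (t : ℕ) : Finset (Vt t) :=
  {Sum.inl 0} ∪ Finset.univ.image (fun i : Fin t => (Sum.inr (i, Sum.inr (0 : Fin (t+1))) : Vt t))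
    ∪ Finset.univ.image (fun i : Fin t => (Sum.inr (i, Sum.inr (1 : Fin (t+1))) : Vt t))

theorem mem_Wf {t : ℕ} {u : Vt t} : u ∈ Wf t ↔ u = Sum.inl 0 ∨
    (∃ i, u = Sum.inr (i, Sum.inr 0)) ∨ (∃ i, u = Sum.inr (i, Sum.inr (1 : Fin (t+1)))) := by
  simp only [Wf, Finset.mem_union, Finset.mem_singleton, Finset.mem_image, Finset.mem_univ,
    true_and]
  constructor
  · rintro ((h | ⟨i, h⟩) | ⟨i, h⟩)
    · exact Or.inl h
    · exact Or.inr (Or.inl ⟨i, h.symm⟩)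
    · exact Or.inr (Or.inr ⟨i, h.symm⟩)
  · rintro (h | ⟨i, h⟩ | ⟨i, h⟩)
    · exact Or.inl (Or.inl h)
    · exact Or.inl (Or.inr ⟨i, h.symm⟩)
    · exact Or.inr ⟨i, h.symm⟩

theorem card_Wf {t : ℕ} (ht : 1 ≤ t) : (Wf t).card = 2*t+1 := by
  classical
  have h01 : (0 : Fin (t+1)) ≠ 1 := by
    intro hh
    have := congrArg Fin.val hh
    rw [Fin.val_one'] at this
    simp at this
    omega
  have hinj0 : Function.Injective
      (fun i : Fin t => (Sum.inr (i, Sum.inr (0 : Fin (t+1))) : Vt t)) := by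
    intro i j hij; simpa using hij
  have hinj1 : Function.Injective
      (fun i : Fin t => (Sum.inr (i, Sum.inr (1 : Fin (t+1))) : Vt t)) := by
    intro i j hij; simpa using hij
  have d1 : Disjoint ({(Sum.inl 0 : Vt t)} : Finset (Vt t))
      (Finset.univ.image (fun i : Fin t => (Sum.inr (i, Sum.inr (0 : Fin (t+1))) : Vt t))) := by
    simp [Finset.disjoint_left]
  have d2 : Disjoint (({(Sum.inl 0 : Vt t)} : Finset (Vt t)) ∪
      Finset.univ.image (fun i : Fin t => (Sum.inr (i, Sum.inr (0 : Fin (t+1))) : Vt t)))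
      (Finset.univ.image (fun i : Fin t => (Sum.inr (i, Sum.inr (1 : Fin (t+1))) : Vt t))) := by
    rw [Finset.disjoint_union_left]
    constructor
    · simp [Finset.disjoint_left]
    · rw [Finset.disjoint_left]
      intro x hx hx'
      simp only [Finset.mem_image, Finset.mem_univ, true_and] at hx hx'
      obtain ⟨i, rfl⟩ := hx
      obtain ⟨j, hj⟩ := hx'
      have h2 := (Sum.inr.inj hj)
      have h3 : Sum.inr (1 : Fin (t+1)) = (Sum.inr (0 : Fin (t+1)) : Fin t ⊕ Fin (t+1)) :=
        congrArg Prod.snd h2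
      exact h01 (Sum.inr.inj h3).symm
  rw [Wf, Finset.card_union_of_disjoint d2, Finset.card_union_of_disjoint d1,
    Finset.card_singleton, Finset.card_image_of_injective _ hinj0,
    Finset.card_image_of_injective _ hinj1]
  simp
  omega

theorem adjt_inr_inr {t : ℕ} {i j : Fin t} {z z' : Fin t ⊕ Fin (t+1)} :
    adjt t (Sum.inr (i,z)) (Sum.inr (j,z')) ↔ i = j ∧ z ≠ z' := by
  rcases z with a | b <;> rcases z' with a' | b' <;> simp [adjt]

def clt (t : ℕ) : Vt t → Fin (t+1)
  | .inl _ => Fin.last t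
  | .inr (i, _) => i.castSucc

theorem adj_of_same_cl {t : ℕ} {u v : Vt t} (h : clt t u = clt t v) (hne : u ≠ v) :
    adjt t u v := by
  rcases u with h1 | ⟨i, z⟩ <;> rcases v with h2 | ⟨j, z'⟩
  · simp only [adjt]; intro hh; exact hne (by rw [hh])
  · exfalso
    simp only [clt] at h
    have := congrArg Fin.val h
    simp at this
    omega
  · exfalso
    simp only [clt] at h
    have := congrArg Fin.val h
    simp at this
    omega
  · simp only [clt] at h
    have hij : i = j := by
      have := congrArg Fin.val h
      simp at this
      exact Fin.ext this
    subst hij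
    exact adjt_inr_inr.2 ⟨rfl, fun hz => hne (by rw [hz])⟩

theorem exists_cycle_quad (t : ℕ) (S : Set (Vt t)) (hS : 2*t+2 ≤ S.ncard) :
    (∃ a b c, a ∈ S ∧ b ∈ S ∧ c ∈ S ∧ adjt t a b ∧ adjt t b c ∧ adjt t c a) ∨
    (∃ a b c d, a ∈ S ∧ b ∈ S ∧ c ∈ S ∧ d ∈ S ∧ adjt t a b ∧ adjt t b c ∧ adjt t c d ∧
      adjt t d a ∧ a ≠ c ∧ b ≠ d) := by
  classical
  set St := S.toFinset with hSt
  have hmem : ∀ u, u ∈ St ↔ u ∈ S := fun u => Set.mem_toFinset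
  have hStcard : 2*t+2 ≤ St.card := by
    rwa [Set.ncard_eq_toFinset_card'] at hS
  by_cases h3 : ∃ c : Fin (t+1), 3 ≤ (St.filter (fun u => clt t u = c)).card
  · obtain ⟨c, hc⟩ := h3
    have h2 : 2 < (St.filter (fun u => clt t u = c)).card := hc
    rw [Finset.two_lt_card_iff] at h2
    obtain ⟨a, b, c', ha, hb, hc', hab, hac, hbc⟩ := h2
    rw [Finset.mem_filter] at ha hb hc'
    refine Or.inl ⟨a, b, c', (hmem a).1 ha.1, (hmem b).1 hb.1, (hmem c').1 hc'.1, ?_, ?_, ?_⟩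
    · exact adj_of_same_cl (ha.2.trans hb.2.symm) hab
    · exact adj_of_same_cl (hb.2.trans hc'.2.symm) hbc
    · exact adj_of_same_cl (hc'.2.trans ha.2.symm) (Ne.symm hac)
  · push_neg at h3
    have hall : ∀ c, (St.filter (fun u => clt t u = c)).card ≤ 2 := by
      intro c; have := h3 c; omega
    have hmaps : ∀ x ∈ St, clt t x ∈ (Finset.univ : Finset (Fin (t+1))) := by
      intro x _; exact Finset.mem_univ _
    have hsum := Finset.card_eq_sum_card_fiberwise hmaps
    have hfib : ∀ c, 2 ≤ (St.filter (fun u => clt t u = c)).card := by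
      intro c
      have hsplit := Finset.add_sum_erase Finset.univ
        (fun c => (St.filter (fun u => clt t u = c)).card) (Finset.mem_univ c)
      have hbound : ∑ c' ∈ Finset.univ.erase c, (St.filter (fun u => clt t u = c')).card ≤
          (Finset.univ.erase c).card * 2 := by
        have := Finset.sum_le_card_nsmul (Finset.univ.erase c)
          (fun c' => (St.filter (fun u => clt t u = c')).card) 2
          (fun x _ => hall x)
        simpa [smul_eq_mul] using this
      have hec : (Finset.univ.erase c).card = t := by
        rw [Finset.card_erase_of_mem (Finset.mem_univ _)]
        simp
      rw [hec] at hbound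
      beta_reduce at hsplit hbound
      omega
    -- hub fiber has two distinct elements
    have hhub : 1 < (St.filter (fun u => clt t u = Fin.last t)).card := hfib (Fin.last t)
    rw [Finset.one_lt_card] at hhub
    obtain ⟨x, hx, y, hy, hxy⟩ := hhub
    have hubshape : ∀ w ∈ St.filter (fun u => clt t u = Fin.last t),
        ∃ h : Fin (t+1), w = Sum.inl h := by
      intro w hw
      rcases w with h | ⟨j, z⟩
      · exact ⟨h, rfl⟩
      · exfalso
        have := (Finset.mem_filter.1 hw).2
        simp only [clt] at this
        have := congrArg Fin.val this
        simp at this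
        omega
    obtain ⟨p0, rfl⟩ := hubshape x hx
    obtain ⟨q0, rfl⟩ := hubshape y hy
    have hpq0 : p0 ≠ q0 := fun hh => hxy (by rw [hh])
    have key : ∀ p q : Fin (t+1), (p:ℕ) < (q:ℕ) → Sum.inl p ∈ St → Sum.inl q ∈ St →
        (∃ a b c, a ∈ S ∧ b ∈ S ∧ c ∈ S ∧ adjt t a b ∧ adjt t b c ∧ adjt t c a) ∨
        (∃ a b c d, a ∈ S ∧ b ∈ S ∧ c ∈ S ∧ d ∈ S ∧ adjt t a b ∧ adjt t b c ∧ adjt t c d ∧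
          adjt t d a ∧ a ≠ c ∧ b ≠ d) := by
      intro p q hpq hp hq
      have hpt : (p:ℕ) < t := by have := q.isLt; omega
      set i0 : Fin t := ⟨(p:ℕ), hpt⟩ with hi0
      have hpart : 1 < (St.filter (fun u => clt t u = i0.castSucc)).card := hfib _
      rw [Finset.one_lt_card] at hpart
      obtain ⟨u, hu, v, hv, huv⟩ := hpart
      have partshape : ∀ w ∈ St.filter (fun u => clt t u = i0.castSucc),
          ∃ z, w = Sum.inr (i0, z) := by
        intro w hw
        rcases w with h | ⟨j, z⟩
        · exfalso
          have := (Finset.mem_filter.1 hw).2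
          simp only [clt] at this
          have := congrArg Fin.val this
          simp at this
          omega
        · have hcl := (Finset.mem_filter.1 hw).2
          simp only [clt] at hcl
          have : j = i0 := Fin.castSucc_inj.1 hcl
          exact ⟨z, by rw [this]⟩
      obtain ⟨zu, rfl⟩ := partshape u hu
      obtain ⟨zv, rfl⟩ := partshape v hv
      have hzuv : zu ≠ zv := fun hh => huv (by rw [hh])
      have hSu : (Sum.inr (i0, zu) : Vt t) ∈ S := (hmem _).1 (Finset.mem_filter.1 hu).1
      have hSv : (Sum.inr (i0, zv) : Vt t) ∈ S := (hmem _).1 (Finset.mem_filter.1 hv).1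
      have hSp : (Sum.inl p : Vt t) ∈ S := (hmem _).1 hp
      have hSq : (Sum.inl q : Vt t) ∈ S := (hmem _).1 hq
      have hadjuv : adjt t (Sum.inr (i0, zu)) (Sum.inr (i0, zv)) :=
        adjt_inr_inr.2 ⟨rfl, hzuv⟩
      have hqp : q ≠ p := fun hh => (by omega : ¬ ((p:ℕ) < (q:ℕ))) (hh ▸ hpq)
      rcases zu with au | bu <;> rcases zv with av | bv
      · -- both A: triangle with p
        refine Or.inl ⟨Sum.inr (i0, Sum.inl au), Sum.inr (i0, Sum.inl av), Sum.inl p,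
          hSu, hSv, hSp, hadjuv, ?_, ?_⟩
        · show (p:ℕ) = (i0:ℕ); rfl
        · show (p:ℕ) = (i0:ℕ); rfl
      · -- A, B : C4  u - v - q - p - u
        refine Or.inr ⟨Sum.inr (i0, Sum.inl au), Sum.inr (i0, Sum.inr bv), Sum.inl q,
          Sum.inl p, hSu, hSv, hSq, hSp, hadjuv, ?_, ?_, ?_, ?_, ?_⟩
        · show (i0:ℕ) < (q:ℕ); exact hpq
        · exact hqp
        · show (p:ℕ) = (i0:ℕ); rfl
        · simp
        · simp
      · -- B, A : C4  v - u - q - p - v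
        refine Or.inr ⟨Sum.inr (i0, Sum.inl av), Sum.inr (i0, Sum.inr bu), Sum.inl q,
          Sum.inl p, hSv, hSu, hSq, hSp, adjt_inr_inr.2 ⟨rfl, fun hh => hzuv (by rw [hh])⟩,
          ?_, ?_, ?_, ?_, ?_⟩
        · show (i0:ℕ) < (q:ℕ); exact hpq
        · exact hqp
        · show (p:ℕ) = (i0:ℕ); rfl
        · simp
        · simp
      · -- both B: triangle with q
        refine Or.inl ⟨Sum.inr (i0, Sum.inr bu), Sum.inr (i0, Sum.inr bv), Sum.inl q,
          hSu, hSv, hSq, hadjuv, ?_, ?_⟩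
        · show (i0:ℕ) < (q:ℕ); exact hpq
        · show (i0:ℕ) < (q:ℕ); exact hpq
    rcases Nat.lt_or_ge (p0:ℕ) (q0:ℕ) with hlt | hge
    · exact key p0 q0 hlt (Finset.mem_filter.1 hx).1 (Finset.mem_filter.1 hy).1
    · have : (q0:ℕ) < (p0:ℕ) := by
        have : (p0:ℕ) ≠ (q0:ℕ) := fun hh => hpq0 (Fin.ext hh)
        omega
      exact key q0 p0 this (Finset.mem_filter.1 hy).1 (Finset.mem_filter.1 hx).1


theorem Wf_adj_unique {t : ℕ} {wa wb wc : Vt t} (ha : wa ∈ Wf t) (hb : wb ∈ Wf t)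
    (hc : wc ∈ Wf t) (hab : adjt t wa wb) (hac : adjt t wa wc) : wb = wc := by
  have det : ∀ i : Fin t, ∀ ε ε' : Fin (t+1), ε' ≠ ε → (∀ w, w ∈ Wf t →
      adjt t (Sum.inr (i, Sum.inr ε)) w →
      (w = Sum.inr (i, Sum.inr ε') ∨ (∃ j, w = Sum.inr (j, Sum.inr ε)) ∧ False) → True) := by
    intro _ _ _ _ _ _ _ _; trivial
  rcases mem_Wf.1 ha with rfl | ⟨i, rfl⟩ | ⟨i, rfl⟩
  · exfalso
    rcases mem_Wf.1 hb with rfl | ⟨j, rfl⟩ | ⟨j, rfl⟩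
    · exact (by simp [adjt] at hab)
    · simp only [adjt] at hab
      simp at hab
    · simp only [adjt] at hab
      simp at hab
  · -- wa = inr (i, inr 0): unique nbr in Wf is inr (i, inr 1)
    have huniq : ∀ w, w ∈ Wf t → adjt t (Sum.inr (i, Sum.inr 0)) w →
        w = Sum.inr (i, Sum.inr 1) := by
      intro w hw hadj
      rcases mem_Wf.1 hw with rfl | ⟨j, rfl⟩ | ⟨j, rfl⟩
      · exfalso; simp only [adjt] at hadj; simp at hadj
      · exfalso
        rw [adjt_inr_inr] at hadj
        exact hadj.2 rfl
      · rw [adjt_inr_inr] at hadj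
        rw [hadj.1]
    rw [huniq wb hb hab, huniq wc hc hac]
  · have huniq : ∀ w, w ∈ Wf t → adjt t (Sum.inr (i, Sum.inr 1)) w →
        w = Sum.inr (i, Sum.inr 0) := by
      intro w hw hadj
      rcases mem_Wf.1 hw with rfl | ⟨j, rfl⟩ | ⟨j, rfl⟩
      · exfalso; simp only [adjt] at hadj; simp at hadj
      · rw [adjt_inr_inr] at hadj
        rw [hadj.1]
      · exfalso
        rw [adjt_inr_inr] at hadj
        exact hadj.2 rfl
    rw [huniq wb hb hab, huniq wc hc hac]

theorem stmt2 (k : ℕ) (hk : 2 ≤ k) (hke : Even k) :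
    ∃ G : SimpleGraph (Fin (k * (k + 2) / 2 + 1)),
      Degenerate G k ∧ fvsNum G = k ^ 2 / 2 := by
  classical
  obtain ⟨t, rfl⟩ := hke
  have ht : 1 ≤ t := by omega
  have hkk : (t+t) * ((t+t)+2) = (2*(t*t) + 2*t)*2 := by ring
  have hn : (t+t) * ((t+t)+2) / 2 + 1 = 2*(t*t) + 2*t + 1 := by
    rw [hkk, Nat.mul_div_cancel _ (by norm_num)]
  have hk2 : (t+t)^2 / 2 = 2*(t*t) := by
    have h2 : (t+t)^2 = (2*(t*t))*2 := by ring
    rw [h2, Nat.mul_div_cancel _ (by norm_num)]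
  have hVcard : Fintype.card (Vt t) = (t+t) * ((t+t)+2) / 2 + 1 := by
    rw [hn]
    simp only [Vt, Fintype.card_sum, Fintype.card_prod, Fintype.card_fin]
    ring
  set N := (t+t) * ((t+t)+2) / 2 + 1 with hNdef
  let e : Vt t ≃ Fin N := Fintype.equivFinOfCardEq hVcard
  refine ⟨SimpleGraph.comap e.symm (Gt t), ?_, ?_⟩
  · -- Degenerate
    intro s hs
    obtain ⟨v, hv, hmin⟩ := Set.exists_min_image s (fun x => rho t (e.symm x))
      (Set.toFinite s) hs
    obtain ⟨T, hTcard, hT⟩ := later_nbrs t (e.symm v)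
    refine ⟨v, hv, ?_⟩
    have hsub : s ∩ (SimpleGraph.comap e.symm (Gt t)).neighborSet v ⊆ (fun x => e x) '' ↑T := by
      rintro u ⟨hus, hadj⟩
      rw [SimpleGraph.mem_neighborSet, SimpleGraph.comap_adj] at hadj
      have hmemT : e.symm u ∈ T := hT _ hadj (hmin u hus)
      exact ⟨e.symm u, hmemT, by simp⟩
    calc (s ∩ (SimpleGraph.comap e.symm (Gt t)).neighborSet v).ncard
        ≤ ((fun x => e x) '' ↑T).ncard :=
          Set.ncard_le_ncard hsub ((T.finite_toSet).image _)
      _ = (↑T : Set (Vt t)).ncard := Set.ncard_image_of_injective _ e.injective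
      _ = T.card := Set.ncard_coe_finset T
      _ ≤ t+t := by omega
  · -- fvsNum
    have hWcard := card_Wf ht
    set S0 : Set (Fin N) := (fun x => e x) '' ↑(Wf t) with hS0
    have hS0card : S0.ncard = 2*t+1 := by
      rw [hS0, Set.ncard_image_of_injective _ e.injective, Set.ncard_coe_finset, hWcard]
    have hcompl := Set.ncard_add_ncard_compl S0
    rw [Nat.card_eq_fintype_card, Fintype.card_fin] at hcompl
    have hF'card : (S0ᶜ).ncard = 2*(t*t) := by omega
    have hacyc : ((SimpleGraph.comap e.symm (Gt t)).induce ((S0ᶜ)ᶜ)).IsAcyclic := by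
      rw [compl_compl]
      apply acyclic_of_deg_le_one
      rintro ⟨a, ha⟩ ⟨b, hb⟩ ⟨c, hc⟩ hab hac
      obtain ⟨wa, hwa, rfl⟩ := ha
      obtain ⟨wb, hwb, rfl⟩ := hb
      obtain ⟨wc, hwc, rfl⟩ := hc
      have hab' : adjt t wa wb := by
        have : (SimpleGraph.comap e.symm (Gt t)).Adj (e wa) (e wb) := hab
        rw [SimpleGraph.comap_adj] at this
        simp at this; exact this
      have hac' : adjt t wa wc := by
        have : (SimpleGraph.comap e.symm (Gt t)).Adj (e wa) (e wc) := hac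
        rw [SimpleGraph.comap_adj] at this
        simp at this; exact this
      have := Wf_adj_unique hwa hwb hwc hab' hac'
      exact Subtype.ext (congrArg e this)
    have hmemS : (t+t)^2/2 ∈ {n | ∃ F : Set (Fin N),
        (((SimpleGraph.comap e.symm (Gt t))).induce Fᶜ).IsAcyclic ∧ F.ncard = n} :=
      ⟨S0ᶜ, hacyc, by rw [hF'card, hk2]⟩
    refine le_antisymm (Nat.sInf_le hmemS) (le_csInf ⟨_, hmemS⟩ ?_)
    rintro m ⟨F, hFac, rfl⟩
    by_contra hlt
    push_neg at hlt
    rw [hk2] at hlt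
    have hcompl2 := Set.ncard_add_ncard_compl F
    rw [Nat.card_eq_fintype_card, Fintype.card_fin] at hcompl2
    have hFc : 2*t+2 ≤ (Fᶜ).ncard := by omega
    set S : Set (Vt t) := e.symm '' Fᶜ with hS
    have hScard : 2*t+2 ≤ S.ncard := by
      rw [hS, Set.ncard_image_of_injective _ e.symm.injective]
      exact hFc
    have hmemF : ∀ w, w ∈ S → e w ∈ Fᶜ := by
      rintro w ⟨x, hx, rfl⟩
      simpa using hx
    have hliftInd : ∀ (w1 w2 : Vt t) (m1 : e w1 ∈ Fᶜ) (m2 : e w2 ∈ Fᶜ), adjt t w1 w2 →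
        ((SimpleGraph.comap e.symm (Gt t)).induce Fᶜ).Adj ⟨e w1, m1⟩ ⟨e w2, m2⟩ := by
      intro w1 w2 m1 m2 h
      show (SimpleGraph.comap e.symm (Gt t)).Adj (e w1) (e w2)
      rw [SimpleGraph.comap_adj]
      simp; exact h
    rcases exists_cycle_quad t S hScard with
      ⟨a, b, c, hSa, hSb, hSc, h1, h2, h3⟩ |
      ⟨a, b, c, d, hSa, hSb, hSc, hSd, h1, h2, h3, h4, hac, hbd⟩
    · exact not_acyclic_of_triangle
        (hliftInd a b (hmemF a hSa) (hmemF b hSb) h1)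
        (hliftInd b c (hmemF b hSb) (hmemF c hSc) h2)
        (hliftInd c a (hmemF c hSc) (hmemF a hSa) h3) hFac
    · refine not_acyclic_of_c4
        (hliftInd a b (hmemF a hSa) (hmemF b hSb) h1)
        (hliftInd b c (hmemF b hSb) (hmemF c hSc) h2)
        (hliftInd c d (hmemF c hSc) (hmemF d hSd) h3)
        (hliftInd d a (hmemF d hSd) (hmemF a hSa) h4)
        ?_ ?_ hFac
      · intro hh
        exact hac (e.injective (congrArg Subtype.val hh))
      · intro hh
        exact hbd (e.injective (congrArg Subtype.val hh))
end

section
/- Let k ≥ 2 be an even integer and let G be a nonempty finite simple graph that is k-degenerate. Then the minimum size f(G) of a feedback vertex set of G satisfies the strict inequality f(G) < (k/(k+2))·n(G). -/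
set_option linter.unusedSectionVars false

open scoped Classical
open Finset SimpleGraph.Walk

namespace Stmt4Proof


variable {V : Type*} [Fintype V] (G : SimpleGraph V)

noncomputable def nbr (v : V) : Finset V := Finset.univ.filter (fun u => G.Adj v u)

lemma mem_nbr {v u : V} : u ∈ nbr G v ↔ G.Adj v u := by simp [nbr]

lemma not_mem_nbr_self (v : V) : v ∉ nbr G v := by simp [mem_nbr]

lemma nbr_symm {v u : V} (h : u ∈ nbr G v) : v ∈ nbr G u := by
  rw [mem_nbr] at h ⊢; exact h.symm

def NCS (A : Finset V) : Prop :=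
  ∀ S : Finset V, S ⊆ A → S.Nonempty → ∃ v ∈ S, (S ∩ nbr G v).card ≤ 1

lemma inter_fiber_card {q : ℕ} (cl : V → Fin q) (T : Finset V) (s : Finset V) :
    (T ∩ s).card = ∑ i : Fin q, (T ∩ s.filter (fun x => cl x = i)).card := by
  have h1 : ∀ i : Fin q, T ∩ s.filter (fun x => cl x = i)
      = (T ∩ s).filter (fun x => cl x = i) := by
    intro i
    ext x
    simp only [Finset.mem_inter, Finset.mem_filter]
    tauto
  rw [Finset.card_eq_sum_card_fiberwise (f := cl) (t := Finset.univ)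
    (fun x _ => Finset.mem_univ _)]
  exact Finset.sum_congr rfl (fun i _ => by rw [h1 i])

lemma not_ncs_witness {B : Finset V} (h : ¬ NCS G B) :
    ∃ S : Finset V, S ⊆ B ∧ S.Nonempty ∧ ∀ x ∈ S, 2 ≤ (S ∩ nbr G x).card := by
  unfold NCS at h
  push_neg at h
  obtain ⟨S, hSB, hne, h2⟩ := h
  exact ⟨S, hSB, hne, fun x hx => by have := h2 x hx; omega⟩

theorem main_lemma {k q : ℕ} (hq : k + 2 = 2 * q) (hq2 : 2 ≤ q)
    (hdeg' : ∀ s : Finset V, s.Nonempty → ∃ v ∈ s, (s ∩ nbr G v).card ≤ k)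
    (hpart : ∃ cl : V → Fin q, ∀ i, NCS G (Finset.univ.filter (fun x => cl x = i)))
    [Nonempty V] :
    ∃ A : Finset V, NCS G A ∧ Fintype.card V < q * A.card := by
  set n := Fintype.card V with hn
  set MS : Set ℕ := {m | ∃ A : Finset V, NCS G A ∧ A.card = m} with hMS
  have hMSne : MS.Nonempty := ⟨0, ∅, fun S hS hne => by
    simp [Finset.subset_empty.mp hS] at hne, by simp⟩
  have hMSbdd : BddAbove MS := ⟨n, fun m hm => by
    obtain ⟨A, _, rfl⟩ := hm; exact Finset.card_le_univ A⟩
  set a := sSup MS with ha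
  obtain ⟨A₀, hA₀, hA₀card⟩ : ∃ A : Finset V, NCS G A ∧ A.card = a :=
    Nat.sSup_mem hMSne hMSbdd
  have hmax : ∀ B : Finset V, NCS G B → B.card ≤ a := fun B hB =>
    le_csSup hMSbdd ⟨B, hB, rfl⟩
  by_cases hwin : n < q * a
  · exact ⟨A₀, hA₀, by rwa [hA₀card]⟩
  push_neg at hwin   -- q * a ≤ n
  exfalso
  obtain ⟨cl, hcl⟩ := hpart
  set F : Fin q → Finset V := fun i => Finset.univ.filter (fun x => cl x = i) with hF
  have hmemF : ∀ (x : V) (i : Fin q), x ∈ F i ↔ cl x = i := by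
    intro x i; simp [hF]
  have hself : ∀ x : V, x ∈ F (cl x) := fun x => (hmemF x _).mpr rfl
  have hsumF : ∑ i : Fin q, (F i).card = n := by
    rw [hn, ← Finset.card_univ,
      Finset.card_eq_sum_card_fiberwise (f := cl) (t := Finset.univ)
        (fun x _ => Finset.mem_univ _)]
  have hFle : ∀ i, (F i).card ≤ a := fun i => hmax _ (hcl i)
  have hcardfin : (Finset.univ : Finset (Fin q)).card = q := by simp
  -- every class has card exactly a
  have hFeq : ∀ i, (F i).card = a := by
    intro i
    have h2 : ∑ j ∈ Finset.univ.erase i, (F j).card ≤ (Finset.univ.erase i).card * a := by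
      calc ∑ j ∈ Finset.univ.erase i, (F j).card
          ≤ ∑ _j ∈ Finset.univ.erase i, a := Finset.sum_le_sum (fun j _ => hFle j)
      _ = (Finset.univ.erase i).card * a := by rw [Finset.sum_const, smul_eq_mul]
    have h3 : (Finset.univ.erase i).card = q - 1 := by
      rw [Finset.card_erase_of_mem (Finset.mem_univ i), hcardfin]
    have h4 : ∑ j ∈ Finset.univ.erase i, (F j).card + (F i).card = n := by
      rw [Finset.sum_erase_add _ _ (Finset.mem_univ i)]; exact hsumF
    have h5 : (q - 1) * a + a = q * a := by
      have : q - 1 + 1 = q := by omega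
      calc (q - 1) * a + a = (q - 1 + 1) * a := by ring
      _ = q * a := by rw [this]
    rw [h3] at h2
    have := hFle i
    omega
  -- blockedness
  have hblocked : ∀ (w : V) (i : Fin q), cl w ≠ i →
      ∃ S : Finset V, S ⊆ insert w (F i) ∧ w ∈ S ∧ ∀ x ∈ S, 2 ≤ (S ∩ nbr G x).card := by
    intro w i hwi
    have hwFi : w ∉ F i := fun h => hwi ((hmemF w i).mp h)
    have hnot : ¬ NCS G (insert w (F i)) := by
      intro hN
      have := hmax _ hN
      rw [Finset.card_insert_of_notMem hwFi, hFeq i] at this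
      omega
    obtain ⟨S, hSB, hne, h2⟩ := not_ncs_witness G hnot
    refine ⟨S, hSB, ?_, h2⟩
    by_contra hwS
    have hSC : S ⊆ F i := fun x hx => by
      rcases Finset.mem_insert.mp (hSB hx) with rfl | h
      · exact absurd hx hwS
      · exact h
    obtain ⟨v, hv, h1⟩ := hcl i S hSC hne
    have := h2 v hv
    omega
  have hmin2 : ∀ (w : V) (i : Fin q), cl w ≠ i → 2 ≤ (nbr G w ∩ F i).card := by
    intro w i hwi
    obtain ⟨S, hSB, hwS, h2⟩ := hblocked w i hwi
    have hsub : S ∩ nbr G w ⊆ nbr G w ∩ F i := by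
      intro x hx
      rw [Finset.mem_inter] at hx ⊢
      refine ⟨hx.2, ?_⟩
      rcases Finset.mem_insert.mp (hSB hx.1) with rfl | h
      · exact absurd hx.2 (not_mem_nbr_self G x)
      · exact h
    calc 2 ≤ (S ∩ nbr G w).card := h2 w hwS
    _ ≤ _ := Finset.card_le_card hsub
  -- degree decomposition
  have hdecomp : ∀ w : V, ∑ i : Fin q, (nbr G w ∩ F i).card = (nbr G w).card := by
    intro w
    have h0 := inter_fiber_card cl (nbr G w) Finset.univ
    rw [Finset.inter_univ] at h0
    exact h0.symm
  -- everyone has degree ≥ k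
  have hdegall : ∀ w : V, k ≤ (nbr G w).card := by
    intro w
    have h1 : ∀ i ∈ Finset.univ.erase (cl w), 2 ≤ (nbr G w ∩ F i).card := by
      intro i hi
      exact hmin2 w i (fun h => (Finset.mem_erase.mp hi).1 h.symm)
    have h2 : (Finset.univ.erase (cl w)).card * 2 ≤
        ∑ i ∈ Finset.univ.erase (cl w), (nbr G w ∩ F i).card := by
      calc (Finset.univ.erase (cl w)).card * 2 = ∑ _i ∈ Finset.univ.erase (cl w), 2 := by
            rw [Finset.sum_const, smul_eq_mul]
      _ ≤ _ := Finset.sum_le_sum h1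
    have h3 : (Finset.univ.erase (cl w)).card = q - 1 := by
      rw [Finset.card_erase_of_mem (Finset.mem_univ _), hcardfin]
    have h4 : ∑ i ∈ Finset.univ.erase (cl w), (nbr G w ∩ F i).card ≤
        ∑ i : Fin q, (nbr G w ∩ F i).card := by
      refine Finset.sum_le_sum_of_subset ?_
      exact Finset.erase_subset _ _
    rw [hdecomp w] at h4
    rw [h3] at h2
    have hk2 : (q - 1) * 2 = k := by omega
    omega
  -- Dset
  set Dset : Finset V := Finset.univ.filter (fun v => (nbr G v).card ≤ k) with hDset
  have hmemD : ∀ v : V, v ∈ Dset ↔ (nbr G v).card ≤ k := by intro v; simp [hDset]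
  have hDne : Dset.Nonempty := by
    obtain ⟨v, _, hvk⟩ := hdeg' Finset.univ ⟨Classical.arbitrary V, Finset.mem_univ _⟩
    rw [Finset.univ_inter] at hvk
    exact ⟨v, (hmemD v).mpr hvk⟩
  -- exact structure of low (degree k) vertices
  have hlow : ∀ v ∈ Dset, (nbr G v ∩ F (cl v)).card = 0 ∧
      ∀ i : Fin q, i ≠ cl v → (nbr G v ∩ F i).card = 2 := by
    intro v hv
    have hdv : (nbr G v).card ≤ k := (hmemD v).mp hv
    have hsum := hdecomp v
    have h2 : ∀ i ∈ Finset.univ.erase (cl v), 2 ≤ (nbr G v ∩ F i).card :=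
      fun i hi => hmin2 v i (fun h => (Finset.mem_erase.mp hi).1 h.symm)
    have herase : ∑ i ∈ Finset.univ.erase (cl v), (nbr G v ∩ F i).card + (nbr G v ∩ F (cl v)).card
        = (nbr G v).card := by rw [Finset.sum_erase_add _ _ (Finset.mem_univ _)]; exact hsum
    have hlb : (q - 1) * 2 ≤ ∑ i ∈ Finset.univ.erase (cl v), (nbr G v ∩ F i).card := by
      calc (q-1) * 2 = (Finset.univ.erase (cl v)).card * 2 := by
            rw [Finset.card_erase_of_mem (Finset.mem_univ _), hcardfin]
      _ = ∑ _i ∈ Finset.univ.erase (cl v), 2 := by rw [Finset.sum_const, smul_eq_mul]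
      _ ≤ _ := Finset.sum_le_sum h2
    constructor
    · omega
    · intro j hj
      have hjmem : j ∈ Finset.univ.erase (cl v) := Finset.mem_erase.mpr ⟨hj, Finset.mem_univ _⟩
      have hsplit : ∑ i ∈ (Finset.univ.erase (cl v)).erase j, (nbr G v ∩ F i).card
          + (nbr G v ∩ F j).card = ∑ i ∈ Finset.univ.erase (cl v), (nbr G v ∩ F i).card := by
        rw [Finset.sum_erase_add _ _ hjmem]
      have hlb2 : (q - 2) * 2 ≤
          ∑ i ∈ (Finset.univ.erase (cl v)).erase j, (nbr G v ∩ F i).card := by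
        calc (q-2) * 2 = ((Finset.univ.erase (cl v)).erase j).card * 2 := by
              rw [Finset.card_erase_of_mem hjmem, Finset.card_erase_of_mem (Finset.mem_univ _),
                hcardfin]
              omega
        _ = ∑ _i ∈ (Finset.univ.erase (cl v)).erase j, 2 := by
              rw [Finset.sum_const, smul_eq_mul]
        _ ≤ _ := Finset.sum_le_sum (fun i hi => h2 i (Finset.mem_of_mem_erase hi))
      have := h2 j hjmem
      omega
  -- neighbors of Dset vertices have degree ≥ k + 2
  have hnbrD : ∀ v ∈ Dset, ∀ z ∈ nbr G v, k + 2 ≤ (nbr G z).card := by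
    intro v hv z hz
    obtain ⟨hown, hforeign⟩ := hlow v hv
    have hownempty : nbr G v ∩ F (cl v) = ∅ := Finset.card_eq_zero.mp hown
    have hzv : cl z ≠ cl v := by
      intro h
      have : z ∈ nbr G v ∩ F (cl v) := Finset.mem_inter.mpr ⟨hz, h ▸ hself z⟩
      rw [hownempty] at this
      exact absurd this (Finset.notMem_empty z)
    have hvz : v ∈ nbr G z := nbr_symm G hz
    -- (α) z has a neighbor in its own class
    have hα : 1 ≤ (nbr G z ∩ F (cl z)).card := by
      obtain ⟨S, hSB, hvS, h2S⟩ := hblocked v (cl z) (fun h => hzv h.symm)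
      have hsub : S ∩ nbr G v ⊆ nbr G v ∩ F (cl z) := by
        intro x hx
        rw [Finset.mem_inter] at hx ⊢
        refine ⟨hx.2, ?_⟩
        rcases Finset.mem_insert.mp (hSB hx.1) with rfl | h
        · exact absurd hx.2 (not_mem_nbr_self G x)
        · exact h
      have hc2 : (nbr G v ∩ F (cl z)).card = 2 := hforeign (cl z) hzv
      have heq : S ∩ nbr G v = nbr G v ∩ F (cl z) := by
        apply Finset.eq_of_subset_of_card_le hsub
        rw [hc2]
        exact h2S v hvS
      have hzS : z ∈ S := by
        have : z ∈ nbr G v ∩ F (cl z) := Finset.mem_inter.mpr ⟨hz, hself z⟩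
        rw [← heq] at this
        exact (Finset.mem_inter.mp this).1
      have h2z := h2S z hzS
      have hsub2 : S ∩ nbr G z ⊆ insert v (nbr G z ∩ F (cl z)) := by
        intro x hx
        rw [Finset.mem_inter] at hx
        rcases Finset.mem_insert.mp (hSB hx.1) with rfl | h
        · exact Finset.mem_insert_self _ _
        · exact Finset.mem_insert_of_mem (Finset.mem_inter.mpr ⟨hx.2, h⟩)
      have hc1 := Finset.card_le_card hsub2
      have hc2 := Finset.card_insert_le v (nbr G z ∩ F (cl z))
      omega
    -- (β) z has ≥ 3 neighbors in class of v
    have hβ : 3 ≤ (nbr G z ∩ F (cl v)).card := by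
      obtain ⟨S', hSB', hzS', h2S'⟩ := hblocked z (cl v) hzv
      have hvS' : v ∉ S' := by
        intro hvS'
        have h2v := h2S' v hvS'
        have hsub : S' ∩ nbr G v ⊆ insert z (nbr G v ∩ F (cl v)) := by
          intro x hx
          rw [Finset.mem_inter] at hx
          rcases Finset.mem_insert.mp (hSB' hx.1) with rfl | h
          · exact Finset.mem_insert_self _ _
          · exact Finset.mem_insert_of_mem (Finset.mem_inter.mpr ⟨hx.2, h⟩)
        rw [hownempty] at hsub
        have := Finset.card_le_card hsub
        simp at this
        omega
      have hsub : S' ∩ nbr G z ⊆ (nbr G z ∩ F (cl v)).erase v := by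
        intro x hx
        rw [Finset.mem_inter] at hx
        rw [Finset.mem_erase]
        constructor
        · intro h; exact hvS' (h ▸ hx.1)
        · rcases Finset.mem_insert.mp (hSB' hx.1) with rfl | h
          · exact absurd hx.2 (not_mem_nbr_self G x)
          · exact Finset.mem_inter.mpr ⟨hx.2, h⟩
      have h2z := h2S' z hzS'
      have hcard := Finset.card_le_card hsub
      have hvmem : v ∈ nbr G z ∩ F (cl v) := Finset.mem_inter.mpr ⟨hvz, hself v⟩
      have hc3 := Finset.card_erase_of_mem hvmem
      omega
    -- sum up
    have hsum := hdecomp z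
    have hsplit1 : ∑ i ∈ Finset.univ.erase (cl z), (nbr G z ∩ F i).card
        + (nbr G z ∩ F (cl z)).card = (nbr G z).card := by
      rw [Finset.sum_erase_add _ _ (Finset.mem_univ _)]; exact hsum
    have hvmem1 : cl v ∈ Finset.univ.erase (cl z) :=
      Finset.mem_erase.mpr ⟨fun h => hzv h.symm, Finset.mem_univ _⟩
    have hsplit2 : ∑ i ∈ (Finset.univ.erase (cl z)).erase (cl v), (nbr G z ∩ F i).card
        + (nbr G z ∩ F (cl v)).card
        = ∑ i ∈ Finset.univ.erase (cl z), (nbr G z ∩ F i).card := by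
      rw [Finset.sum_erase_add _ _ hvmem1]
    have hrest : (q - 2) * 2 ≤
        ∑ i ∈ (Finset.univ.erase (cl z)).erase (cl v), (nbr G z ∩ F i).card := by
      have hcarde : ((Finset.univ.erase (cl z)).erase (cl v)).card = q - 2 := by
        rw [Finset.card_erase_of_mem hvmem1, Finset.card_erase_of_mem (Finset.mem_univ _),
          hcardfin]
        omega
      calc (q-2) * 2 = ((Finset.univ.erase (cl z)).erase (cl v)).card * 2 := by rw [hcarde]
      _ = ∑ _i ∈ (Finset.univ.erase (cl z)).erase (cl v), 2 := by
            rw [Finset.sum_const, smul_eq_mul]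
      _ ≤ _ := by
            refine Finset.sum_le_sum (fun i hi => ?_)
            have hi1 := Finset.mem_erase.mp hi
            have hi2 := Finset.mem_erase.mp hi1.2
            exact hmin2 z i (fun h => hi2.1 h.symm)
    omega
  -- find z with two Dset-neighbors
  have hDnotall : ∃ z₀ : V, z₀ ∉ Dset := by
    obtain ⟨v₀, hv₀⟩ := hDne
    have hd : (nbr G v₀).card = k := le_antisymm ((hmemD v₀).mp hv₀) (hdegall v₀)
    have : 0 < (nbr G v₀).card := by omega
    obtain ⟨z₀, hz₀⟩ := Finset.card_pos.mp this
    refine ⟨z₀, fun hz₀D => ?_⟩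
    have h1n := hnbrD v₀ hv₀ z₀ hz₀
    have h2n := (hmemD z₀).mp hz₀D
    omega
  have hsne : (Finset.univ \ Dset).Nonempty := by
    obtain ⟨z₀, hz₀⟩ := hDnotall
    exact ⟨z₀, Finset.mem_sdiff.mpr ⟨Finset.mem_univ _, hz₀⟩⟩
  obtain ⟨z, hzs, hzk⟩ := hdeg' (Finset.univ \ Dset) hsne
  have hzD : z ∉ Dset := (Finset.mem_sdiff.mp hzs).2
  have hzdeg : k + 1 ≤ (nbr G z).card := by
    have := (hmemD z).not.mp (by simpa using hzD)
    omega
  have hsplit : (nbr G z ∩ Dset).card + (nbr G z \ Dset).card = (nbr G z).card :=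
    Finset.card_inter_add_card_sdiff _ _
  have hinter : (Finset.univ \ Dset) ∩ nbr G z = nbr G z \ Dset := by
    ext x; simp [Finset.mem_sdiff, Finset.mem_inter, and_comm]
  rw [hinter] at hzk
  have hD1 : 1 ≤ (nbr G z ∩ Dset).card := by omega
  obtain ⟨v₁, hv₁⟩ := Finset.card_pos.mp (by omega : 0 < (nbr G z ∩ Dset).card)
  have hv₁D : v₁ ∈ Dset := (Finset.mem_inter.mp hv₁).2
  have hzv₁ : z ∈ nbr G v₁ := nbr_symm G (Finset.mem_inter.mp hv₁).1
  have hzdeg2 : k + 2 ≤ (nbr G z).card := hnbrD v₁ hv₁D z hzv₁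
  have hD2 : 2 ≤ (nbr G z ∩ Dset).card := by omega
  obtain ⟨v, hvmem, v', hv'mem, hvv'⟩ := (Finset.one_lt_card (s := nbr G z ∩ Dset)).mp (by omega)
  have hvD : v ∈ Dset := (Finset.mem_inter.mp hvmem).2
  have hv'D : v' ∈ Dset := (Finset.mem_inter.mp hv'mem).2
  have hzv : z ∈ nbr G v := nbr_symm G (Finset.mem_inter.mp hvmem).1
  have hzv' : z ∈ nbr G v' := nbr_symm G (Finset.mem_inter.mp hv'mem).1
  -- the contradiction forest
  obtain ⟨hown_v, hfor_v⟩ := hlow v hvD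
  obtain ⟨hown_v', hfor_v'⟩ := hlow v' hv'D
  have hownempty_v : nbr G v ∩ F (cl v) = ∅ := Finset.card_eq_zero.mp hown_v
  have hownempty_v' : nbr G v' ∩ F (cl v') = ∅ := Finset.card_eq_zero.mp hown_v'
  have hclv : cl v ≠ cl z := by
    intro h
    have : z ∈ nbr G v ∩ F (cl v) := Finset.mem_inter.mpr ⟨hzv, h ▸ hself z⟩
    rw [hownempty_v] at this
    exact absurd this (Finset.notMem_empty z)
  have hclv' : cl v' ≠ cl z := by
    intro h
    have : z ∈ nbr G v' ∩ F (cl v') := Finset.mem_inter.mpr ⟨hzv', h ▸ hself z⟩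
    rw [hownempty_v'] at this
    exact absurd this (Finset.notMem_empty z)
  have hnonadj : v' ∉ nbr G v := by
    intro hadj
    have := hnbrD v hvD v' hadj
    have := (hmemD v').mp hv'D
    omega
  have hnonadj' : v ∉ nbr G v' := fun h => hnonadj (nbr_symm G h)
  set C : Finset V := F (cl z) with hC
  have hzC : z ∈ C := hself z
  have hvC : v ∉ C := fun h => hclv ((hmemF v _).mp h)
  have hv'C : v' ∉ C := fun h => hclv' ((hmemF v' _).mp h)
  have hc2v : (nbr G v ∩ C).card = 2 := hfor_v (cl z) (fun h => hclv h.symm)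
  have hc2v' : (nbr G v' ∩ C).card = 2 := hfor_v' (cl z) (fun h => hclv' h.symm)
  set W : Finset V := insert v (insert v' (C.erase z)) with hW
  have hvne : v ∉ insert v' (C.erase z) := by
    rw [Finset.mem_insert]
    push_neg
    exact ⟨hvv', fun h => hvC (Finset.mem_of_mem_erase h)⟩
  have hv'ne : v' ∉ C.erase z := fun h => hv'C (Finset.mem_of_mem_erase h)
  have hWcard : W.card = a + 1 := by
    rw [hW, Finset.card_insert_of_notMem hvne, Finset.card_insert_of_notMem hv'ne,
      Finset.card_erase_of_mem hzC]
    have hCa : C.card = a := hFeq (cl z)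
    have : 1 ≤ C.card := Finset.card_pos.mpr ⟨z, hzC⟩
    omega
  have hWncs : NCS G W := by
    intro S hS hSne
    by_cases hvS : v ∈ S
    · refine ⟨v, hvS, ?_⟩
      have hsub : S ∩ nbr G v ⊆ (nbr G v ∩ C).erase z := by
        intro x hx
        rw [Finset.mem_inter] at hx
        have hxW := hS hx.1
        rw [hW, Finset.mem_insert, Finset.mem_insert] at hxW
        rcases hxW with rfl | rfl | hxe
        · exact absurd hx.2 (not_mem_nbr_self G x)
        · exact absurd hx.2 hnonadj
        · rw [Finset.mem_erase] at hxe ⊢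
          exact ⟨hxe.1, Finset.mem_inter.mpr ⟨hx.2, hxe.2⟩⟩
      have hzin : z ∈ nbr G v ∩ C := Finset.mem_inter.mpr ⟨hzv, hzC⟩
      have hc4 := Finset.card_erase_of_mem hzin
      have hc5 := Finset.card_le_card hsub
      omega
    by_cases hv'S : v' ∈ S
    · refine ⟨v', hv'S, ?_⟩
      have hsub : S ∩ nbr G v' ⊆ (nbr G v' ∩ C).erase z := by
        intro x hx
        rw [Finset.mem_inter] at hx
        have hxW := hS hx.1
        rw [hW, Finset.mem_insert, Finset.mem_insert] at hxW
        rcases hxW with rfl | rfl | hxe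
        · exact absurd hx.2 hnonadj'
        · exact absurd hx.2 (not_mem_nbr_self G x)
        · rw [Finset.mem_erase] at hxe ⊢
          exact ⟨hxe.1, Finset.mem_inter.mpr ⟨hx.2, hxe.2⟩⟩
      have hzin : z ∈ nbr G v' ∩ C := Finset.mem_inter.mpr ⟨hzv', hzC⟩
      have hc6 := Finset.card_erase_of_mem hzin
      have hc7 := Finset.card_le_card hsub
      omega
    · have hSC : S ⊆ C := by
        intro x hx
        have hxW := hS hx
        rw [hW, Finset.mem_insert, Finset.mem_insert] at hxW
        rcases hxW with rfl | rfl | hxe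
        · exact absurd hx hvS
        · exact absurd hx hv'S
        · exact Finset.mem_of_mem_erase hxe
      exact hcl (cl z) S hSC hSne
  have hfin := hmax W hWncs
  omega


/-- a vertex of a cycle has two distinct neighbors on the cycle. -/
lemma cycle_two_nbrs {W : Type*} {H : SimpleGraph W} {w : W} (d : H.Walk w w)
    (hd : d.IsCycle) :
    ∃ u₁ u₂, u₁ ≠ u₂ ∧ H.Adj w u₁ ∧ H.Adj w u₂ ∧ u₁ ∈ d.support ∧ u₂ ∈ d.support := by
  have hlen3 : 3 ≤ d.length := hd.three_le_length
  have hnil : ¬ d.Nil := hd.not_nil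
  have hqpath : d.tail.IsPath := by
    rw [SimpleGraph.Walk.isPath_def, support_tail_of_not_nil d hnil]
    exact hd.support_nodup
  have hadj1 : H.Adj w (d.getVert 1) := d.adj_snd hnil
  have hqlen : d.tail.length + 1 = d.length := length_tail_add_one hnil
  have hrpath : d.tail.reverse.IsPath := hqpath.reverse
  have hrnil : ¬ d.tail.reverse.Nil := not_nil_of_ne (fun hww => hadj1.ne' hww.symm)
  have hadj2 : H.Adj w (d.tail.reverse.getVert 1) := d.tail.reverse.adj_snd hrnil
  refine ⟨d.getVert 1, d.tail.reverse.getVert 1, ?_, hadj1, hadj2, ?_, ?_⟩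
  · intro he
    -- if equal, the path d.tail.reverse : Walk w (d.getVert 1) has second vertex = endpoint
    have htail : d.tail.reverse.tail.IsPath := by
      have := cons_tail_eq d.tail.reverse hrnil
      have h2 := hrpath
      rw [← this] at h2
      exact h2.of_cons
    -- d.tail.reverse.tail : Walk (d.tail.reverse.getVert 1) (d.getVert 1); endpoints equal by ← he
    have hcopy : (d.tail.reverse.tail.copy (by exact he.symm) rfl).IsPath :=
      (SimpleGraph.Walk.isPath_copy _ _ _).mpr htail
    have hnil2 : (d.tail.reverse.tail.copy (by exact he.symm) rfl :
        H.Walk (d.getVert 1) (d.getVert 1)) = SimpleGraph.Walk.nil := by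
      rwa [SimpleGraph.Walk.isPath_iff_eq_nil] at hcopy
    have hlen0 : d.tail.reverse.tail.length = 0 := by
      have := congrArg SimpleGraph.Walk.length hnil2
      simpa using this
    have : d.tail.reverse.length = 1 := by
      have := length_tail_add_one hrnil
      omega
    rw [length_reverse] at this
    omega
  · rw [mem_support_iff_exists_getVert]
    exact ⟨1, rfl, by omega⟩
  · -- in d.tail.reverse.support = d.tail.support ⊆ d.support
    have h1 : d.tail.reverse.getVert 1 ∈ d.tail.reverse.support := by
      rw [mem_support_iff_exists_getVert]
      refine ⟨1, rfl, ?_⟩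
      rw [length_reverse]
      omega
    rw [support_reverse, List.mem_reverse] at h1
    have h2 : d.tail.support = d.support.tail := support_tail_of_not_nil d hnil
    rw [h2] at h1
    exact List.mem_of_mem_tail h1

lemma ncs_isAcyclic {A : Finset V} (hA : NCS G A) : (G.induce (A : Set V)).IsAcyclic := by
  intro v₀ c hc
  set S : Finset V := Finset.image (fun x => (x : V)) c.support.toFinset with hS
  have hmemS : ∀ x : V, x ∈ S ↔ ∃ y, y ∈ c.support ∧ (y : V) = x := by
    intro x
    simp [hS]
  have hSA : S ⊆ A := by
    intro x hx
    obtain ⟨y, _, rfl⟩ := (hmemS x).mp hx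
    exact y.2
  have hv₀ : (v₀ : V) ∈ S := (hmemS _).mpr ⟨v₀, c.start_mem_support, rfl⟩
  obtain ⟨x, hwS, hw1⟩ := hA S hSA ⟨_, hv₀⟩
  obtain ⟨w', hw's, rfl⟩ := (hmemS x).mp hwS
  have hd := hc.rotate hw's
  obtain ⟨u₁, u₂, hne, ha1, ha2, hm1, hm2⟩ := cycle_two_nbrs (c.rotate _ hw's) hd
  have hrot : ∀ x, x ∈ (c.rotate _ hw's).support → x ∈ c.support := by
    intro x hx
    have hperm := (support_rotate c _ hw's).perm
    rw [support_eq_cons (c.rotate _ hw's)] at hx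
    rcases List.mem_cons.mp hx with rfl | h
    · exact hw's
    · exact List.mem_of_mem_tail (hperm.mem_iff.mp h)
  have hm1' : (u₁ : V) ∈ S := (hmemS _).mpr ⟨u₁, hrot _ hm1, rfl⟩
  have hm2' : (u₂ : V) ∈ S := (hmemS _).mpr ⟨u₂, hrot _ hm2, rfl⟩
  have hadj1 : G.Adj (w' : V) (u₁ : V) := ha1
  have hadj2 : G.Adj (w' : V) (u₂ : V) := ha2
  have hpair : ({(u₁ : V), (u₂ : V)} : Finset V) ⊆ S ∩ nbr G (w' : V) := by
    intro x hx
    rcases Finset.mem_insert.mp hx with rfl | hx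
    · exact Finset.mem_inter.mpr ⟨hm1', (mem_nbr G).mpr hadj1⟩
    · rw [Finset.mem_singleton] at hx
      subst hx
      exact Finset.mem_inter.mpr ⟨hm2', (mem_nbr G).mpr hadj2⟩
  have h2le : 2 ≤ (S ∩ nbr G (w' : V)).card := by
    have h2 : ({(u₁ : V), (u₂ : V)} : Finset V).card = 2 :=
      Finset.card_pair (by simpa using Subtype.coe_ne_coe.mpr hne)
    calc 2 = _ := h2.symm
    _ ≤ _ := Finset.card_le_card hpair
  omega


lemma ncs_empty : NCS G (∅ : Finset V) := by
  intro S hS hne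
  simp [Finset.subset_empty.mp hS] at hne

lemma ncs_insert {A : Finset V} {v : V} (hA : NCS G A) (h1 : (nbr G v ∩ A).card ≤ 1) :
    NCS G (insert v A) := by
  intro S hS hne
  by_cases hv : v ∈ S
  · refine ⟨v, hv, ?_⟩
    have hsub : S ∩ nbr G v ⊆ nbr G v ∩ A := by
      intro x hx
      rw [Finset.mem_inter] at hx ⊢
      refine ⟨hx.2, ?_⟩
      rcases Finset.mem_insert.mp (hS hx.1) with h | h
      · exact absurd (h ▸ hx.2) (not_mem_nbr_self G v)
      · exact h
    exact le_trans (Finset.card_le_card hsub) h1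
  · refine hA S (fun x hx => ?_) hne
    rcases Finset.mem_insert.mp (hS hx) with h | h
    · exact absurd (h ▸ hx) hv
    · exact h

/-- existence of a partition (given by a coloring) into q forests -/
lemma exists_partition {k q : ℕ} (hq : k + 2 = 2 * q) (hq2 : 2 ≤ q)
    (hdeg' : ∀ s : Finset V, s.Nonempty → ∃ v ∈ s, (s ∩ nbr G v).card ≤ k) :
    ∀ s : Finset V, ∃ cl : V → Fin q, ∀ i, NCS G (s.filter (fun x => cl x = i)) := by
  intro s
  induction s using Finset.strongInduction with
  | _ s ih =>
    rcases Finset.eq_empty_or_nonempty s with rfl | hne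
    · exact ⟨fun _ => ⟨0, by omega⟩, fun i => by
        simpa using ncs_empty G⟩
    · obtain ⟨v, hvs, hvk⟩ := hdeg' s hne
      obtain ⟨cl', hcl'⟩ := ih (s.erase v) (Finset.erase_ssubset hvs)
      -- pigeonhole: some class sees ≤ 1 neighbors of v
      have hsum : ∑ i : Fin q, (nbr G v ∩ (s.erase v).filter (fun x => cl' x = i)).card ≤ k := by
        rw [← inter_fiber_card cl' (nbr G v) (s.erase v)]
        calc (nbr G v ∩ s.erase v).card ≤ (nbr G v ∩ s).card :=
              Finset.card_le_card (Finset.inter_subset_inter le_rfl (Finset.erase_subset _ _))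
        _ = (s ∩ nbr G v).card := by rw [Finset.inter_comm]
        _ ≤ k := hvk
      have hpig : ∃ i₀ : Fin q, (nbr G v ∩ (s.erase v).filter (fun x => cl' x = i₀)).card ≤ 1 := by
        by_contra hcon
        push_neg at hcon
        have : ∑ i : Fin q, 2 ≤
            ∑ i : Fin q, (nbr G v ∩ (s.erase v).filter (fun x => cl' x = i)).card :=
          Finset.sum_le_sum (fun i _ => hcon i)
        simp only [Finset.sum_const, Finset.card_univ, Fintype.card_fin, smul_eq_mul] at this
        omega
      obtain ⟨i₀, hi₀⟩ := hpig
      refine ⟨Function.update cl' v i₀, fun i => ?_⟩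
      have hfib : ∀ i : Fin q, s.filter (fun x => Function.update cl' v i₀ x = i)
          = if i = i₀ then insert v ((s.erase v).filter (fun x => cl' x = i))
            else (s.erase v).filter (fun x => cl' x = i) := by
        intro i
        ext x
        by_cases hx : x = v
        · subst hx
          simp only [Finset.mem_filter, Function.update_self]
          by_cases hii : i = i₀
          · simp [hii, hvs]
          · simp only [if_neg hii, Finset.mem_filter, Finset.mem_erase]
            constructor
            · rintro ⟨-, h⟩; exact absurd h.symm hii
            · rintro ⟨⟨h, -⟩, -⟩; exact absurd rfl h
        · simp only [Finset.mem_filter, Function.update_of_ne hx]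
          by_cases hii : i = i₀ <;>
            simp [hii, Finset.mem_insert, hx, Finset.mem_filter, Finset.mem_erase]
      rw [hfib i]
      by_cases hii : i = i₀
      · subst hii
        simp only [if_pos rfl]
        exact ncs_insert G (hcl' i) hi₀
      · simp only [if_neg hii]
        exact hcl' i


end Stmt4Proof

theorem stmt4 {V : Type*} [Fintype V] [Nonempty V] (k : ℕ) (hk : 2 ≤ k) (hke : Even k)
    (G : SimpleGraph V) (hdeg : Degenerate G k) :
    (fvsNum G : ℚ) < (k : ℚ) / ((k : ℚ) + 2) * Fintype.card V := by
  open Stmt4Proof in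
  classical
  obtain ⟨m, hm⟩ := hke
  set q : ℕ := m + 1 with hqdef
  have hq : k + 2 = 2 * q := by omega
  have hq2 : 2 ≤ q := by omega
  have hdeg' : ∀ s : Finset V, s.Nonempty → ∃ v ∈ s, (s ∩ Stmt4Proof.nbr G v).card ≤ k := by
    intro s hs
    obtain ⟨v, hv, hcard⟩ := hdeg (↑s : Set V) (by exact_mod_cast hs)
    refine ⟨v, Finset.mem_coe.mp hv, ?_⟩
    have hset : ((↑s : Set V) ∩ G.neighborSet v) = ↑(s ∩ Stmt4Proof.nbr G v) := by
      ext x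
      simp [Stmt4Proof.nbr, SimpleGraph.mem_neighborSet]
    rw [hset, Set.ncard_coe_finset] at hcard
    exact hcard
  obtain ⟨A, hA, hAcard⟩ := Stmt4Proof.main_lemma G hq hq2 hdeg'
    (Stmt4Proof.exists_partition G hq hq2 hdeg' Finset.univ)
  have hfvs : fvsNum G ≤ Fintype.card V - A.card := by
    apply Nat.sInf_le
    refine ⟨(↑A : Set V)ᶜ, ?_, ?_⟩
    · rw [compl_compl]
      exact Stmt4Proof.ncs_isAcyclic G hA
    · rw [← Finset.coe_compl, Set.ncard_coe_finset, Finset.card_compl]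
  have hAle : A.card ≤ Fintype.card V := Finset.card_le_univ A
  have hkpos : (0:ℚ) < (k:ℚ) + 2 := by positivity
  rw [div_mul_eq_mul_div, lt_div_iff₀ hkpos]
  have hfQ : (fvsNum G : ℚ) ≤ (Fintype.card V : ℚ) - (A.card : ℚ) := by
    have := hfvs
    have hcast : ((Fintype.card V - A.card : ℕ) : ℚ)
        = (Fintype.card V : ℚ) - (A.card : ℚ) := by
      rw [Nat.cast_sub hAle]
    calc (fvsNum G : ℚ) ≤ ((Fintype.card V - A.card : ℕ) : ℚ) := by exact_mod_cast hfvs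
    _ = _ := hcast
  have hxQ : (Fintype.card V : ℚ) < (q : ℚ) * (A.card : ℚ) := by exact_mod_cast hAcard
  have hkQ : (k : ℚ) + 2 = 2 * (q : ℚ) := by exact_mod_cast hq
  have key1 : (fvsNum G : ℚ) * ((k:ℚ) + 2)
      ≤ ((Fintype.card V : ℚ) - (A.card : ℚ)) * ((k:ℚ) + 2) :=
    mul_le_mul_of_nonneg_right hfQ (le_of_lt hkpos)
  have key2 : ((Fintype.card V : ℚ) - (A.card : ℚ)) * ((k:ℚ) + 2)
      = 2 * ((q:ℚ) * (Fintype.card V : ℚ)) - 2 * ((q:ℚ) * (A.card : ℚ)) := by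
    rw [hkQ]; ring
  have hk' : (k : ℚ) = 2 * (q:ℚ) - 2 := by linarith
  have key4 : (k:ℚ) * (Fintype.card V : ℚ)
      = 2 * ((q:ℚ) * (Fintype.card V : ℚ)) - 2 * (Fintype.card V : ℚ) := by
    rw [hk']; ring
  linarith
end

section
/- Let k ≥ 1 be an integer and let D be a finite oriented graph whose underlying undirected graph is k-degenerate. Then the minimum size f(D) of a (directed) feedback vertex set of D satisfies f(D) ≤ ((k−1)/(k+1))·n(D). -/
/-- `F` is a feedback vertex set of the digraph given by the arc relation `A`:
after deleting `F`, no directed cycle remains. -/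
def DirFVS {V : Type*} (A : V → V → Prop) (F : Set V) : Prop :=
  ∀ v : V, ¬ Relation.TransGen (fun x y => x ∉ F ∧ y ∉ F ∧ A x y) v v

/-- `dirFvsNum A` is the minimum size of a directed feedback vertex set. -/
noncomputable def dirFvsNum {V : Type*} [Fintype V] (A : V → V → Prop) : ℕ :=
  sInf {n | ∃ F : Set V, DirFVS A F ∧ F.ncard = n}

set_option linter.unusedVariables false
set_option linter.unusedSectionVars false

open Finset

open Finset
section Aux2
variable {V : Type*} [DecidableEq V]

def inN (A : V → V → Prop) [DecidableRel A] (s : Finset V) (v : V) : Finset V :=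
  s.filter (fun w => A w v)

def outN (A : V → V → Prop) [DecidableRel A] (s : Finset V) (v : V) : Finset V :=
  s.filter (fun w => A v w)

lemma mem_inN {A : V → V → Prop} [DecidableRel A] {s : Finset V} {v w : V} :
    w ∈ inN A s v ↔ w ∈ s ∧ A w v := mem_filter

lemma mem_outN {A : V → V → Prop} [DecidableRel A] {s : Finset V} {v w : V} :
    w ∈ outN A s v ↔ w ∈ s ∧ A v w := mem_filter

lemma inN_subset {A : V → V → Prop} [DecidableRel A] {s : Finset V} {v : V} :
    inN A s v ⊆ s := filter_subset _ _

lemma outN_subset {A : V → V → Prop} [DecidableRel A] {s : Finset V} {v : V} :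
    outN A s v ⊆ s := filter_subset _ _

end Aux2



section Aux
variable {V : Type*} [DecidableEq V] {A : V → V → Prop}

lemma mem_of_insert {x a : V} {S' : Finset V} (ha : a ∈ insert x S') (hax : a ≠ x) :
    a ∈ S' := by
  rcases mem_insert.1 ha with h | h
  · exact absurd h hax
  · exact h

lemma mem_of_insert2 {x y a : V} {S' : Finset V} (ha : a ∈ insert x (insert y S'))
    (hax : a ≠ x) (hay : a ≠ y) : a ∈ S' := by
  rcases mem_insert.1 ha with h | h
  · exact absurd h hax
  · rcases mem_insert.1 h with h' | h'
    · exact absurd h' hay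
    · exact h'

/-- Extend an ordered acyclic set by a new "source" vertex `x`. -/
lemma extS {S' : Finset V} {f' : V → ℕ}
    (hf' : ∀ a ∈ S', ∀ b ∈ S', A a b → f' a < f' b) {x : V}
    (hxx : ¬ A x x) (hin : ∀ a ∈ S', ¬ A a x) :
    ∃ f : V → ℕ, ∀ a ∈ insert x S', ∀ b ∈ insert x S', A a b → f a < f b := by
  refine ⟨fun v => if v = x then 0 else f' v + 1, ?_⟩
  intro a ha b hb hab
  by_cases hax : a = x
  · by_cases hbx : b = x
    · rw [hax, hbx] at hab; exact absurd hab hxx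
    · simp only [if_pos hax, if_neg hbx]; omega
  · have ha' : a ∈ S' := mem_of_insert ha hax
    by_cases hbx : b = x
    · rw [hbx] at hab; exact absurd hab (hin a ha')
    · have hb' : b ∈ S' := mem_of_insert hb hbx
      simp only [if_neg hax, if_neg hbx]
      exact Nat.add_lt_add_right (hf' a ha' b hb' hab) 1

/-- Extend an ordered acyclic set by a new "sink" vertex `x`. -/
lemma extT {S' : Finset V} {f' : V → ℕ}
    (hf' : ∀ a ∈ S', ∀ b ∈ S', A a b → f' a < f' b) {x : V}
    (hxx : ¬ A x x) (hout : ∀ b ∈ S', ¬ A x b) :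
    ∃ f : V → ℕ, ∀ a ∈ insert x S', ∀ b ∈ insert x S', A a b → f a < f b := by
  refine ⟨fun v => if v = x then S'.sup f' + 1 else f' v, ?_⟩
  intro a ha b hb hab
  by_cases hax : a = x
  · by_cases hbx : b = x
    · rw [hax, hbx] at hab; exact absurd hab hxx
    · rw [hax] at hab; exact absurd hab (hout b (mem_of_insert hb hbx))
  · have ha' : a ∈ S' := mem_of_insert ha hax
    by_cases hbx : b = x
    · simp only [if_neg hax, if_pos hbx]
      have := le_sup (f := f') ha'
      omega
    · have hb' : b ∈ S' := mem_of_insert hb hbx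
      simp only [if_neg hax, if_neg hbx]
      exact hf' a ha' b hb' hab

/-- Extend by two sources `x`, `y` (possibly with an arc `x → y` but not `y → x`). -/
lemma extSS {S' : Finset V} {f' : V → ℕ}
    (hf' : ∀ a ∈ S', ∀ b ∈ S', A a b → f' a < f' b) {x y : V}
    (hxy : x ≠ y) (hyx : ¬ A y x) (hxx : ¬ A x x) (hyy : ¬ A y y)
    (hinx : ∀ a ∈ S', ¬ A a x) (hiny : ∀ a ∈ S', ¬ A a y) :
    ∃ f : V → ℕ, ∀ a ∈ insert x (insert y S'), ∀ b ∈ insert x (insert y S'),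
      A a b → f a < f b := by
  refine ⟨fun v => if v = x then 0 else if v = y then 1 else f' v + 2, ?_⟩
  intro a ha b hb hab
  by_cases hax : a = x
  · by_cases hbx : b = x
    · rw [hax, hbx] at hab; exact absurd hab hxx
    · simp only [if_pos hax, if_neg hbx]
      by_cases hby : b = y
      · simp only [if_pos hby]; omega
      · simp only [if_neg hby]; omega
  · by_cases hay : a = y
    · by_cases hbx : b = x
      · rw [hay, hbx] at hab; exact absurd hab hyx
      · by_cases hby : b = y
        · rw [hay, hby] at hab; exact absurd hab hyy
        · have hb' : b ∈ S' := mem_of_insert2 hb hbx hby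
          simp only [if_neg hbx, if_neg hby, if_pos hay, if_neg (hay ▸ hax : ¬ a = x)]
          omega
    · have ha' : a ∈ S' := mem_of_insert2 ha hax hay
      by_cases hbx : b = x
      · rw [hbx] at hab; exact absurd hab (hinx a ha')
      · by_cases hby : b = y
        · rw [hby] at hab; exact absurd hab (hiny a ha')
        · have hb' : b ∈ S' := mem_of_insert2 hb hbx hby
          simp only [if_neg hax, if_neg hay, if_neg hbx, if_neg hby]
          exact Nat.add_lt_add_right (hf' a ha' b hb' hab) 2

/-- Extend by two sinks `x`, `y` (possibly with an arc `x → y` but not `y → x`). -/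
lemma extTT {S' : Finset V} {f' : V → ℕ}
    (hf' : ∀ a ∈ S', ∀ b ∈ S', A a b → f' a < f' b) {x y : V}
    (hxy : x ≠ y) (hyx : ¬ A y x) (hxx : ¬ A x x) (hyy : ¬ A y y)
    (houtx : ∀ b ∈ S', ¬ A x b) (houty : ∀ b ∈ S', ¬ A y b) :
    ∃ f : V → ℕ, ∀ a ∈ insert x (insert y S'), ∀ b ∈ insert x (insert y S'),
      A a b → f a < f b := by
  refine ⟨fun v => if v = x then S'.sup f' + 1 else if v = y then S'.sup f' + 2
    else f' v, ?_⟩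
  intro a ha b hb hab
  by_cases hax : a = x
  · by_cases hbx : b = x
    · rw [hax, hbx] at hab; exact absurd hab hxx
    · by_cases hby : b = y
      · simp only [if_pos hax, if_neg hbx, if_pos hby]; omega
      · rw [hax] at hab; exact absurd hab (houtx b (mem_of_insert2 hb hbx hby))
  · by_cases hay : a = y
    · by_cases hbx : b = x
      · rw [hay, hbx] at hab; exact absurd hab hyx
      · by_cases hby : b = y
        · rw [hay, hby] at hab; exact absurd hab hyy
        · rw [hay] at hab; exact absurd hab (houty b (mem_of_insert2 hb hbx hby))
    · have ha' : a ∈ S' := mem_of_insert2 ha hax hay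
      have hsa := le_sup (f := f') ha'
      by_cases hbx : b = x
      · simp only [if_neg hax, if_neg hay, if_pos hbx]; omega
      · by_cases hby : b = y
        · simp only [if_neg hax, if_neg hay, if_neg hbx, if_pos hby]; omega
        · have hb' : b ∈ S' := mem_of_insert2 hb hbx hby
          simp only [if_neg hax, if_neg hay, if_neg hbx, if_neg hby]
          exact hf' a ha' b hb' hab

/-- Extend by a source `x` and a sink `y`, no arc `y → x`. -/
lemma extST {S' : Finset V} {f' : V → ℕ}
    (hf' : ∀ a ∈ S', ∀ b ∈ S', A a b → f' a < f' b) {x y : V}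
    (hxy : x ≠ y) (hyx : ¬ A y x) (hxx : ¬ A x x) (hyy : ¬ A y y)
    (hinx : ∀ a ∈ S', ¬ A a x) (houty : ∀ b ∈ S', ¬ A y b) :
    ∃ f : V → ℕ, ∀ a ∈ insert x (insert y S'), ∀ b ∈ insert x (insert y S'),
      A a b → f a < f b := by
  refine ⟨fun v => if v = x then 0 else if v = y then S'.sup f' + 2
    else f' v + 1, ?_⟩
  intro a ha b hb hab
  by_cases hax : a = x
  · by_cases hbx : b = x
    · rw [hax, hbx] at hab; exact absurd hab hxx
    · by_cases hby : b = y
      · simp only [if_pos hax, if_neg hbx, if_pos hby]; omega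
      · simp only [if_pos hax, if_neg hbx, if_neg hby]; omega
  · by_cases hay : a = y
    · by_cases hbx : b = x
      · rw [hay, hbx] at hab; exact absurd hab hyx
      · by_cases hby : b = y
        · rw [hay, hby] at hab; exact absurd hab hyy
        · rw [hay] at hab; exact absurd hab (houty b (mem_of_insert2 hb hbx hby))
    · have ha' : a ∈ S' := mem_of_insert2 ha hax hay
      have hsa := le_sup (f := f') ha'
      by_cases hbx : b = x
      · rw [hbx] at hab; exact absurd hab (hinx a ha')
      · by_cases hby : b = y
        · simp only [if_neg hax, if_neg hay, if_neg hbx, if_pos hby]; omega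
        · have hb' : b ∈ S' := mem_of_insert2 hb hbx hby
          simp only [if_neg hax, if_neg hay, if_neg hbx, if_neg hby]
          exact Nat.add_lt_add_right (hf' a ha' b hb' hab) 1

end Aux

section Aux
variable {V : Type*} [DecidableEq V] {A : V → V → Prop}

/-- One step of the induction: remove `X`, keep `T ⊆ X`. -/
lemma move {k n : ℕ} {s X T : Finset V}
    (ih : ∀ t : Finset V, t.card ≤ n → ∃ S : Finset V, S ⊆ t ∧
      (∃ f : V → ℕ, ∀ a ∈ S, ∀ b ∈ S, A a b → f a < f b) ∧
      2 * t.card ≤ (k+1) * S.card)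
    (hs : s.card ≤ n + 1) (hTX : T ⊆ X) (hXs : X ⊆ s) (hXne : X.Nonempty)
    (hcost : 2 * X.card ≤ (k+1) * T.card)
    (hext : ∀ S' : Finset V, ∀ f' : V → ℕ, S' ⊆ s \ X →
      (∀ a ∈ S', ∀ b ∈ S', A a b → f' a < f' b) →
      ∃ f : V → ℕ, ∀ a ∈ T ∪ S', ∀ b ∈ T ∪ S', A a b → f a < f b) :
    ∃ S : Finset V, S ⊆ s ∧ (∃ f : V → ℕ, ∀ a ∈ S, ∀ b ∈ S, A a b → f a < f b) ∧
      2 * s.card ≤ (k+1) * S.card := by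
  obtain ⟨S', hS's, ⟨f', hf'⟩, hcount⟩ := ih (s \ X) (by
    have h1 := card_sdiff_of_subset hXs
    have h2 := card_pos.2 hXne
    have h3 := card_le_card hXs
    omega)
  obtain ⟨f, hf⟩ := hext S' f' hS's hf'
  have hdisj : Disjoint T S' := by
    rw [Finset.disjoint_left]
    intro a haT haS'
    exact (mem_sdiff.1 (hS's haS')).2 (hTX haT)
  refine ⟨T ∪ S', ?_, ⟨f, hf⟩, ?_⟩
  · exact union_subset (hTX.trans hXs) (hS's.trans sdiff_subset)
  · have hcu : (T ∪ S').card = T.card + S'.card := card_union_of_disjoint hdisj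
    have h1 := card_sdiff_of_subset hXs
    have h3 := card_le_card hXs
    have hsplit : 2 * s.card = 2 * (s \ X).card + 2 * X.card := by omega
    calc 2 * s.card = 2 * (s \ X).card + 2 * X.card := hsplit
      _ ≤ (k+1) * S'.card + (k+1) * T.card := Nat.add_le_add hcount hcost
      _ = (k+1) * ((T ∪ S').card) := by rw [hcu, Nat.mul_add]; ring
end Aux

section Aux3
variable {V : Type*} [DecidableEq V]
lemma single_union_eq {x : V} {S' : Finset V} : ({x} : Finset V) ∪ S' = insert x S' := by
  ext a; simp
lemma pair_union_eq {x y : V} {S' : Finset V} :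
    ({x,y} : Finset V) ∪ S' = insert x (insert y S') := by
  ext a; simp [or_assoc]
end Aux3

lemma key {V : Type*} [DecidableEq V] (k : ℕ) (hk : 1 ≤ k) (A : V → V → Prop)
    [DecidableRel A] (hA : ∀ u v, A u v → ¬ A v u)
    (hdeg' : ∀ t : Finset V, t.Nonempty →
      ∃ v ∈ t, (inN A t v).card + (outN A t v).card ≤ k) :
    ∀ n : ℕ, ∀ s : Finset V, s.card ≤ n → ∃ S : Finset V, S ⊆ s ∧
      (∃ f : V → ℕ, ∀ a ∈ S, ∀ b ∈ S, A a b → f a < f b) ∧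
      2 * s.card ≤ (k+1) * S.card := by
  have loops : ∀ v, ¬ A v v := fun v h => hA v v h h
  intro n
  induction n with
  | zero =>
    intro s hs
    exact ⟨∅, empty_subset _, ⟨fun _ => 0, by simp⟩, by simp [Nat.le_zero.1 hs]⟩
  | succ n ih =>
    intro s hs
    rcases s.eq_empty_or_nonempty with rfl | hne
    · exact ⟨∅, empty_subset _, ⟨fun _ => 0, by simp⟩, by simp⟩
    -- the five possible moves
    by_cases h1 : ∃ v ∈ s, 2 * (insert v (inN A s v)).card ≤ k + 1
    · obtain ⟨v, hvs, hvb⟩ := h1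
      refine move (T := {v}) (X := insert v (inN A s v)) ih hs
        (singleton_subset_iff.2 (mem_insert_self _ _))
        (insert_subset_iff.2 ⟨hvs, inN_subset⟩)
        ⟨v, mem_insert_self _ _⟩
        (by rw [card_singleton, mul_one]; exact hvb)
        ?_
      intro S' f' hS' hf'
      rw [single_union_eq]
      refine extS hf' (loops v) ?_
      intro a ha hAav
      have hmem := mem_sdiff.1 (hS' ha)
      exact hmem.2 (mem_insert_of_mem (mem_inN.2 ⟨hmem.1, hAav⟩))
    by_cases h1' : ∃ v ∈ s, 2 * (insert v (outN A s v)).card ≤ k + 1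
    · obtain ⟨v, hvs, hvb⟩ := h1'
      refine move (T := {v}) (X := insert v (outN A s v)) ih hs
        (singleton_subset_iff.2 (mem_insert_self _ _))
        (insert_subset_iff.2 ⟨hvs, outN_subset⟩)
        ⟨v, mem_insert_self _ _⟩
        (by rw [card_singleton, mul_one]; exact hvb)
        ?_
      intro S' f' hS' hf'
      rw [single_union_eq]
      refine extT hf' (loops v) ?_
      intro a ha hAva
      have hmem := mem_sdiff.1 (hS' ha)
      exact hmem.2 (mem_insert_of_mem (mem_outN.2 ⟨hmem.1, hAva⟩))
    by_cases h2 : ∃ x ∈ s, ∃ y ∈ s, x ≠ y ∧ ¬ A y x ∧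
        ({x,y} ∪ inN A s x ∪ inN A s y).card ≤ k + 1
    · obtain ⟨x, hxs, y, hys, hxy, hyx, hb⟩ := h2
      refine move (T := {x,y}) (X := {x,y} ∪ inN A s x ∪ inN A s y) ih hs
        (subset_union_left.trans subset_union_left)
        (union_subset (union_subset
          (insert_subset_iff.2 ⟨hxs, singleton_subset_iff.2 hys⟩) inN_subset) inN_subset)
        ⟨x, mem_union_left _ (mem_union_left _ (mem_insert_self _ _))⟩
        (by rw [card_pair hxy]; omega)
        ?_
      intro S' f' hS' hf'
      rw [pair_union_eq]
      refine extSS hf' hxy hyx (loops x) (loops y) ?_ ?_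
      · intro a ha hAax
        have hmem := mem_sdiff.1 (hS' ha)
        exact hmem.2 (mem_union_left _ (mem_union_right _ (mem_inN.2 ⟨hmem.1, hAax⟩)))
      · intro a ha hAay
        have hmem := mem_sdiff.1 (hS' ha)
        exact hmem.2 (mem_union_right _ (mem_inN.2 ⟨hmem.1, hAay⟩))
    by_cases h2' : ∃ x ∈ s, ∃ y ∈ s, x ≠ y ∧ ¬ A y x ∧
        ({x,y} ∪ outN A s x ∪ outN A s y).card ≤ k + 1
    · obtain ⟨x, hxs, y, hys, hxy, hyx, hb⟩ := h2'
      refine move (T := {x,y}) (X := {x,y} ∪ outN A s x ∪ outN A s y) ih hs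
        (subset_union_left.trans subset_union_left)
        (union_subset (union_subset
          (insert_subset_iff.2 ⟨hxs, singleton_subset_iff.2 hys⟩) outN_subset) outN_subset)
        ⟨x, mem_union_left _ (mem_union_left _ (mem_insert_self _ _))⟩
        (by rw [card_pair hxy]; omega)
        ?_
      intro S' f' hS' hf'
      rw [pair_union_eq]
      refine extTT hf' hxy hyx (loops x) (loops y) ?_ ?_
      · intro a ha hAxa
        have hmem := mem_sdiff.1 (hS' ha)
        exact hmem.2 (mem_union_left _ (mem_union_right _ (mem_outN.2 ⟨hmem.1, hAxa⟩)))
      · intro a ha hAya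
        have hmem := mem_sdiff.1 (hS' ha)
        exact hmem.2 (mem_union_right _ (mem_outN.2 ⟨hmem.1, hAya⟩))
    by_cases h3 : ∃ x ∈ s, ∃ y ∈ s, x ≠ y ∧ ¬ A y x ∧
        ({x,y} ∪ inN A s x ∪ outN A s y).card ≤ k + 1
    · obtain ⟨x, hxs, y, hys, hxy, hyx, hb⟩ := h3
      refine move (T := {x,y}) (X := {x,y} ∪ inN A s x ∪ outN A s y) ih hs
        (subset_union_left.trans subset_union_left)
        (union_subset (union_subset
          (insert_subset_iff.2 ⟨hxs, singleton_subset_iff.2 hys⟩) inN_subset) outN_subset)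
        ⟨x, mem_union_left _ (mem_union_left _ (mem_insert_self _ _))⟩
        (by rw [card_pair hxy]; omega)
        ?_
      intro S' f' hS' hf'
      rw [pair_union_eq]
      refine extST hf' hxy hyx (loops x) (loops y) ?_ ?_
      · intro a ha hAax
        have hmem := mem_sdiff.1 (hS' ha)
        exact hmem.2 (mem_union_left _ (mem_union_right _ (mem_inN.2 ⟨hmem.1, hAax⟩)))
      · intro a ha hAya
        have hmem := mem_sdiff.1 (hS' ha)
        exact hmem.2 (mem_union_right _ (mem_outN.2 ⟨hmem.1, hAya⟩))
    -- no move is possible: derive a contradiction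
    exfalso
    have hIk : ∀ v ∈ s, k ≤ 2 * (inN A s v).card := by
      intro v hv
      have hnb : v ∉ inN A s v := fun h => loops v (mem_inN.1 h).2
      by_contra hlt
      push_neg at hlt
      exact h1 ⟨v, hv, by rw [card_insert_of_notMem hnb]; omega⟩
    have hOk : ∀ v ∈ s, k ≤ 2 * (outN A s v).card := by
      intro v hv
      have hnb : v ∉ outN A s v := fun h => loops v (mem_outN.1 h).2
      by_contra hlt
      push_neg at hlt
      exact h1' ⟨v, hv, by rw [card_insert_of_notMem hnb]; omega⟩
    obtain ⟨v₀, hv₀s, hv₀⟩ := hdeg' s hne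
    have hv₀I : 2 * (inN A s v₀).card = k ∧ 2 * (outN A s v₀).card = k := by
      have := hIk v₀ hv₀s; have := hOk v₀ hv₀s; omega
    set Z : Finset V :=
      s.filter (fun v => 2 * (inN A s v).card = k ∧ 2 * (outN A s v).card = k) with hZdef
    have hv₀Z : v₀ ∈ Z := mem_filter.2 ⟨hv₀s, hv₀I⟩
    have hZadj : ∀ x ∈ Z, ∀ y ∈ Z, x ≠ y → ¬ A x y := by
      intro x hx y hy hxy hAxy
      rcases mem_filter.1 hx with ⟨hxs, hxI, hxO⟩
      rcases mem_filter.1 hy with ⟨hys, hyI, hyO⟩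
      apply h2
      refine ⟨x, hxs, y, hys, hxy, hA x y hAxy, ?_⟩
      have hxIy : x ∈ inN A s y := mem_inN.2 ⟨hxs, hAxy⟩
      have hsub : ({x,y} ∪ inN A s x ∪ inN A s y) ⊆ insert y (inN A s x ∪ inN A s y) := by
        intro w hw
        simp only [mem_union, mem_insert, mem_singleton] at hw ⊢
        rcases hw with ((rfl|rfl)|h)|h
        · exact Or.inr (Or.inr hxIy)
        · exact Or.inl rfl
        · exact Or.inr (Or.inl h)
        · exact Or.inr (Or.inr h)
      have h4 := card_le_card hsub
      have h5 := card_insert_le y (inN A s x ∪ inN A s y)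
      have h6 := card_union_le (inN A s x) (inN A s y)
      omega
    have hZIdisj : ∀ x ∈ Z, ∀ y ∈ Z, x ≠ y →
        ∀ w, w ∈ inN A s x → w ∈ inN A s y → False := by
      intro x hx y hy hxy w hwx hwy
      rcases mem_filter.1 hx with ⟨hxs, hxI, hxO⟩
      rcases mem_filter.1 hy with ⟨hys, hyI, hyO⟩
      apply h2
      refine ⟨x, hxs, y, hys, hxy, hZadj y hy x hx hxy.symm, ?_⟩
      have h5 := card_union_add_card_inter (inN A s x) (inN A s y)
      have h6 : 1 ≤ (inN A s x ∩ inN A s y).card :=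
        card_pos.2 ⟨w, mem_inter.2 ⟨hwx, hwy⟩⟩
      have h7 : ({x,y} ∪ inN A s x ∪ inN A s y).card ≤
          2 + (inN A s x ∪ inN A s y).card := by
        rw [union_assoc]
        refine (card_union_le _ _).trans ?_
        have h8 := card_insert_le x ({y} : Finset V)
        have h9 : ({y} : Finset V).card = 1 := card_singleton y
        omega
      omega
    have hZOdisj : ∀ x ∈ Z, ∀ y ∈ Z, x ≠ y →
        ∀ w, w ∈ outN A s x → w ∈ outN A s y → False := by
      intro x hx y hy hxy w hwx hwy
      rcases mem_filter.1 hx with ⟨hxs, hxI, hxO⟩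
      rcases mem_filter.1 hy with ⟨hys, hyI, hyO⟩
      apply h2'
      refine ⟨x, hxs, y, hys, hxy, hZadj y hy x hx hxy.symm, ?_⟩
      have h5 := card_union_add_card_inter (outN A s x) (outN A s y)
      have h6 : 1 ≤ (outN A s x ∩ outN A s y).card :=
        card_pos.2 ⟨w, mem_inter.2 ⟨hwx, hwy⟩⟩
      have h7 : ({x,y} ∪ outN A s x ∪ outN A s y).card ≤
          2 + (outN A s x ∪ outN A s y).card := by
        rw [union_assoc]
        refine (card_union_le _ _).trans ?_
        have h8 := card_insert_le x ({y} : Finset V)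
        have h9 : ({y} : Finset V).card = 1 := card_singleton y
        omega
      omega
    have hZIO : ∀ x ∈ Z, ∀ y ∈ Z, x ≠ y →
        ∀ w, w ∈ inN A s x → w ∈ outN A s y → False := by
      intro x hx y hy hxy w hwx hwy
      rcases mem_filter.1 hx with ⟨hxs, hxI, hxO⟩
      rcases mem_filter.1 hy with ⟨hys, hyI, hyO⟩
      apply h3
      refine ⟨x, hxs, y, hys, hxy, hZadj y hy x hx hxy.symm, ?_⟩
      have h5 := card_union_add_card_inter (inN A s x) (outN A s y)
      have h6 : 1 ≤ (inN A s x ∩ outN A s y).card :=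
        card_pos.2 ⟨w, mem_inter.2 ⟨hwx, hwy⟩⟩
      have h7 : ({x,y} ∪ inN A s x ∪ outN A s y).card ≤
          2 + (inN A s x ∪ outN A s y).card := by
        rw [union_assoc]
        refine (card_union_le _ _).trans ?_
        have h8 := card_insert_le x ({y} : Finset V)
        have h9 : ({y} : Finset V).card = 1 := card_singleton y
        omega
      omega
    have hZnbr : ∀ u ∈ s, ∀ x y : V, x ∈ Z → y ∈ Z → x ≠ y →
        x ∈ inN A s u ∪ outN A s u → y ∈ inN A s u ∪ outN A s u → False := by
      intro u hu x y hx hy hxy hxm hym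
      rcases mem_union.1 hxm with hxi | hxo
      · have hux : u ∈ outN A s x := mem_outN.2 ⟨hu, (mem_inN.1 hxi).2⟩
        rcases mem_union.1 hym with hyi | hyo
        · exact hZOdisj x hx y hy hxy u hux (mem_outN.2 ⟨hu, (mem_inN.1 hyi).2⟩)
        · exact hZIO y hy x hx hxy.symm u (mem_inN.2 ⟨hu, (mem_outN.1 hyo).2⟩) hux
      · have hux : u ∈ inN A s x := mem_inN.2 ⟨hu, (mem_outN.1 hxo).2⟩
        rcases mem_union.1 hym with hyi | hyo
        · exact hZIO x hx y hy hxy u hux (mem_outN.2 ⟨hu, (mem_inN.1 hyi).2⟩)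
        · exact hZIdisj x hx y hy hxy u hux (mem_inN.2 ⟨hu, (mem_outN.1 hyo).2⟩)
    by_cases hU : (s \ Z).Nonempty
    · obtain ⟨u, hu', hub⟩ := hdeg' (s \ Z) hU
      have hus : u ∈ s := (mem_sdiff.1 hu').1
      have hunZ : u ∉ Z := (mem_sdiff.1 hu').2
      have hdisjIO : Disjoint (inN A s u) (outN A s u) := by
        rw [disjoint_left]
        intro w hwI hwO
        exact hA w u (mem_inN.1 hwI).2 (mem_outN.1 hwO).2
      have hWcard : (inN A s u ∪ outN A s u).card =
          (inN A s u).card + (outN A s u).card := card_union_of_disjoint hdisjIO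
      have hsd := card_sdiff_add_card_inter (inN A s u ∪ outN A s u) Z
      have hsub9 : (inN A s u ∪ outN A s u) \ Z ⊆
          inN A (s \ Z) u ∪ outN A (s \ Z) u := by
        intro w hw
        rcases mem_sdiff.1 hw with ⟨hwm, hwnZ⟩
        rcases mem_union.1 hwm with h | h
        · exact mem_union_left _
            (mem_inN.2 ⟨mem_sdiff.2 ⟨(mem_inN.1 h).1, hwnZ⟩, (mem_inN.1 h).2⟩)
        · exact mem_union_right _
            (mem_outN.2 ⟨mem_sdiff.2 ⟨(mem_outN.1 h).1, hwnZ⟩, (mem_outN.1 h).2⟩)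
      have h8 : ((inN A s u ∪ outN A s u) \ Z).card ≤ k :=
        (card_le_card hsub9).trans ((card_union_le _ _).trans hub)
      have hint1 : ((inN A s u ∪ outN A s u) ∩ Z).card ≤ 1 := by
        refine card_le_one.2 ?_
        intro a ha b hb
        by_contra hab
        rcases mem_inter.1 ha with ⟨haW, haZ⟩
        rcases mem_inter.1 hb with ⟨hbW, hbZ⟩
        exact hZnbr u hus a b haZ hbZ hab haW hbW
      have hnotZ : ¬ (2 * (inN A s u).card = k ∧ 2 * (outN A s u).card = k) :=
        fun hc => hunZ (mem_filter.2 ⟨hus, hc⟩)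
      have hIu := hIk u hus
      have hOu := hOk u hus
      have hkeven : 2 * (inN A s v₀).card = k := hv₀I.1
      have hZint_pos : 0 < ((inN A s u ∪ outN A s u) ∩ Z).card := by omega
      obtain ⟨x, hxint⟩ := card_pos.1 hZint_pos
      rcases mem_inter.1 hxint with ⟨hxW, hxZ⟩
      rcases mem_filter.1 hxZ with ⟨hxs, hxI, hxO⟩
      have hxu : x ≠ u := fun h => hunZ (h ▸ hxZ)
      have hcases : 2 * (inN A s u).card = k ∨ 2 * (outN A s u).card = k := by omega
      rcases hcases with hIuk | hOuk
      · rcases mem_union.1 hxW with hxi | hxo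
        · have hAxu : A x u := (mem_inN.1 hxi).2
          apply h2
          refine ⟨x, hxs, u, hus, hxu, hA x u hAxu, ?_⟩
          have hsubc : ({x,u} ∪ inN A s x ∪ inN A s u) ⊆
              insert u (inN A s x ∪ inN A s u) := by
            intro w hw
            simp only [mem_union, mem_insert, mem_singleton] at hw ⊢
            rcases hw with ((rfl|rfl)|h)|h
            · exact Or.inr (Or.inr hxi)
            · exact Or.inl rfl
            · exact Or.inr (Or.inl h)
            · exact Or.inr (Or.inr h)
          have h4 := card_le_card hsubc
          have h5 := card_insert_le u (inN A s x ∪ inN A s u)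
          have h6 := card_union_le (inN A s x) (inN A s u)
          omega
        · have hAux : A u x := (mem_outN.1 hxo).2
          have huIx : u ∈ inN A s x := mem_inN.2 ⟨hus, hAux⟩
          apply h2
          refine ⟨u, hus, x, hxs, hxu.symm, hA u x hAux, ?_⟩
          have hsubc : ({u,x} ∪ inN A s u ∪ inN A s x) ⊆
              insert x (inN A s u ∪ inN A s x) := by
            intro w hw
            simp only [mem_union, mem_insert, mem_singleton] at hw ⊢
            rcases hw with ((rfl|rfl)|h)|h
            · exact Or.inr (Or.inr huIx)
            · exact Or.inl rfl
            · exact Or.inr (Or.inl h)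
            · exact Or.inr (Or.inr h)
          have h4 := card_le_card hsubc
          have h5 := card_insert_le x (inN A s u ∪ inN A s x)
          have h6 := card_union_le (inN A s u) (inN A s x)
          omega
      · rcases mem_union.1 hxW with hxi | hxo
        · have hAxu : A x u := (mem_inN.1 hxi).2
          have huOx : u ∈ outN A s x := mem_outN.2 ⟨hus, hAxu⟩
          apply h2'
          refine ⟨x, hxs, u, hus, hxu, hA x u hAxu, ?_⟩
          have hsubc : ({x,u} ∪ outN A s x ∪ outN A s u) ⊆
              insert x (outN A s x ∪ outN A s u) := by
            intro w hw
            simp only [mem_union, mem_insert, mem_singleton] at hw ⊢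
            rcases hw with ((rfl|rfl)|h)|h
            · exact Or.inl rfl
            · exact Or.inr (Or.inl huOx)
            · exact Or.inr (Or.inl h)
            · exact Or.inr (Or.inr h)
          have h4 := card_le_card hsubc
          have h5 := card_insert_le x (outN A s x ∪ outN A s u)
          have h6 := card_union_le (outN A s x) (outN A s u)
          omega
        · have hAux : A u x := (mem_outN.1 hxo).2
          apply h2'
          refine ⟨u, hus, x, hxs, hxu.symm, hA u x hAux, ?_⟩
          have hsubc : ({u,x} ∪ outN A s u ∪ outN A s x) ⊆
              insert u (outN A s u ∪ outN A s x) := by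
            intro w hw
            simp only [mem_union, mem_insert, mem_singleton] at hw ⊢
            rcases hw with ((rfl|rfl)|h)|h
            · exact Or.inl rfl
            · exact Or.inr (Or.inl hxo)
            · exact Or.inr (Or.inl h)
            · exact Or.inr (Or.inr h)
          have h4 := card_le_card hsubc
          have h5 := card_insert_le u (outN A s u ∪ outN A s x)
          have h6 := card_union_le (outN A s u) (outN A s x)
          omega
    · have hsZ : s ⊆ Z := by
        intro w hw
        by_contra hwZ
        exact hU ⟨w, mem_sdiff.2 ⟨hw, hwZ⟩⟩
      have hIpos : 0 < (inN A s v₀).card := by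
        have := hv₀I.1; omega
      obtain ⟨w, hw⟩ := card_pos.1 hIpos
      rcases mem_inN.1 hw with ⟨hws, hAwv⟩
      have hwv : w ≠ v₀ := fun h => loops v₀ (h ▸ hAwv)
      exact hZadj w (hsZ hws) v₀ hv₀Z hwv hAwv

theorem stmt5 {V : Type*} [Fintype V] (k : ℕ) (hk : 1 ≤ k) (A : V → V → Prop)
    (hA : ∀ u v, A u v → ¬ A v u)
    (hdeg : Degenerate (SimpleGraph.fromRel A) k) :
    (dirFvsNum A : ℚ) ≤ ((k : ℚ) - 1) / ((k : ℚ) + 1) * Fintype.card V := by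
  classical
  have loops : ∀ v, ¬ A v v := fun v h => hA v v h h
  have hdeg' : ∀ t : Finset V, t.Nonempty →
      ∃ v ∈ t, (inN A t v).card + (outN A t v).card ≤ k := by
    intro t ht
    obtain ⟨v, hv, hcard⟩ := hdeg ↑t (Finset.coe_nonempty.2 ht)
    refine ⟨v, hv, ?_⟩
    have heq : (↑t ∩ (SimpleGraph.fromRel A).neighborSet v : Set V) =
        ↑(inN A t v ∪ outN A t v) := by
      ext w
      simp only [Set.mem_inter_iff, Finset.coe_union, Set.mem_union, Finset.mem_coe,
        mem_inN, mem_outN, SimpleGraph.mem_neighborSet, SimpleGraph.fromRel_adj]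
      constructor
      · rintro ⟨hw, hne, (h|h)⟩
        · exact Or.inr ⟨hw, h⟩
        · exact Or.inl ⟨hw, h⟩
      · rintro (⟨hw, h⟩ | ⟨hw, h⟩)
        · exact ⟨hw, fun e => loops v (by rw [← e] at h; exact h), Or.inr h⟩
        · exact ⟨hw, fun e => loops v (by rw [← e] at h; exact h), Or.inl h⟩
    rw [heq, Set.ncard_coe_finset] at hcard
    have hdj : Disjoint (inN A t v) (outN A t v) := by
      rw [Finset.disjoint_left]
      intro w hwI hwO
      exact hA w v (mem_inN.1 hwI).2 (mem_outN.1 hwO).2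
    rwa [card_union_of_disjoint hdj] at hcard
  obtain ⟨S, hSs, ⟨f, hford⟩, hcount⟩ :=
    key k hk A hA hdeg' (Fintype.card V) Finset.univ (le_of_eq (Finset.card_univ))
  set F : Set V := ↑(Sᶜ) with hF
  have hFVS : DirFVS A F := by
    intro v hv
    have hmono : ∀ a b : V, (fun x y => x ∉ F ∧ y ∉ F ∧ A x y) a b → f a < f b := by
      rintro a b ⟨ha, hb, hab⟩
      have haS : a ∈ S := by simpa [hF] using ha
      have hbS : b ∈ S := by simpa [hF] using hb
      exact hford a haS b hbS hab
    have htg := Relation.TransGen.mono (p := fun a b => f a < f b) hmono v v hv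
    haveI : IsTrans V (fun a b : V => f a < f b) := ⟨fun a b c hab hbc => lt_trans hab hbc⟩
    rw [Relation.transGen_eq_self (r := fun a b : V => f a < f b)] at htg
    exact lt_irrefl _ htg
  have hle : dirFvsNum A ≤ F.ncard := Nat.sInf_le ⟨F, hFVS, rfl⟩
  have hFn : F.ncard = Fintype.card V - S.card := by
    rw [hF, Set.ncard_coe_finset, Finset.card_compl]
  have hSle : S.card ≤ Fintype.card V := Finset.card_le_univ S
  have hcount' : 2 * Fintype.card V ≤ (k+1) * S.card := by
    rwa [Finset.card_univ] at hcount
  have hq1 : (dirFvsNum A : ℚ) ≤ ((Fintype.card V : ℚ) - (S.card : ℚ)) := by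
    have h0 : (dirFvsNum A : ℚ) ≤ ((Fintype.card V - S.card : ℕ) : ℚ) := by
      exact_mod_cast (hFn ▸ hle)
    rwa [Nat.cast_sub hSle] at h0
  refine hq1.trans ?_
  rw [div_mul_eq_mul_div, le_div_iff₀ (by positivity : (0:ℚ) < (k:ℚ)+1)]
  have hc : (2 * (Fintype.card V : ℚ)) ≤ ((k:ℚ)+1) * (S.card : ℚ) := by
    exact_mod_cast hcount'
  nlinarith [hc]
end

section
/- Let k ≥ 3 be an odd integer and let D be a nonempty finite oriented graph whose underlying undirected graph is k-degenerate. Then the minimum size f(D) of a (directed) feedback vertex set of D satisfies the strict inequality f(D) < ((k−1)/(k+1))·n(D). -/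
section Aux

variable {V : Type*} [Fintype V]

omit [Fintype V] in
/-- A relation with a strictly monotone potential has no closed walks. -/
private lemma aux_no_closed (R : V → V → Prop) (h : V → ℤ)
    (hmono : ∀ a b, R a b → h a < h b) (v : V) : ¬ Relation.TransGen R v v := by
  intro hT
  have key : ∀ a b, Relation.TransGen R a b → h a < h b := by
    intro a b hab
    induction hab with
    | single h1 => exact hmono _ _ h1
    | tail _ h2 ih => exact ih.trans (hmono _ _ h2)
  exact lt_irrefl _ (key v v hT)

/-- One step of the construction: if `x ∈ s` has at most `m - 1` out-neighbours
in `s`, we can delete `x` and its out-neighbours and recurse. -/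
private lemma aux_step (m : ℕ) (hm : 2 ≤ m) (n : ℕ)
    (A : V → V → Prop) (hA : ∀ u v, A u v → ¬ A v u)
    (ih : ∀ s : Set V, s.ncard ≤ n → s.Nonempty →
      ∃ S : Finset V, ↑S ⊆ s ∧ (∃ h : V → ℤ, ∀ a ∈ S, ∀ b ∈ S, A a b → h a < h b) ∧
        s.ncard < m * S.card)
    (s : Set V) (hs : s.ncard ≤ n + 1) (x : V) (hxs : x ∈ s)
    (hOut : {y | y ∈ s ∧ A x y}.ncard ≤ m - 1) :
    ∃ S : Finset V, ↑S ⊆ s ∧ (∃ h : V → ℤ, ∀ a ∈ S, ∀ b ∈ S, A a b → h a < h b) ∧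
      s.ncard < m * S.card := by
  classical
  set Out : Set V := {y | y ∈ s ∧ A x y} with hOutdef
  set s' : Set V := s \ insert x Out with hs'def
  have hxOut : x ∉ Out := fun h => hA x x h.2 h.2
  have hins_sub : insert x Out ⊆ s := Set.insert_subset hxs (fun y hy => hy.1)
  have hcard_ins : (insert x Out).ncard = Out.ncard + 1 :=
    Set.ncard_insert_of_notMem hxOut (Set.toFinite _)
  have hins_le : (insert x Out).ncard ≤ s.ncard :=
    Set.ncard_le_ncard hins_sub (Set.toFinite _)
  have hs'card : s'.ncard = s.ncard - (Out.ncard + 1) := by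
    rw [hs'def, Set.ncard_diff hins_sub (Set.toFinite _), hcard_ins]
  by_cases hne' : s'.Nonempty
  · have hs'pos : 0 < s'.ncard := (Set.ncard_pos (Set.toFinite _)).mpr hne'
    obtain ⟨S', hS'sub, ⟨h', hh'⟩, hcard'⟩ := ih s' (by omega) hne'
    have hxS' : x ∉ S' := fun h => (hS'sub h).2 (Set.mem_insert _ _)
    set B : ℕ := S'.sup fun a => (h' a).natAbs with hBdef
    refine ⟨insert x S', ?_, ⟨fun v => if v = x then (B : ℤ) + 1 else h' v, ?_⟩, ?_⟩
    · rw [Finset.coe_insert]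
      exact Set.insert_subset hxs (hS'sub.trans Set.diff_subset)
    · intro a ha b hb hab
      show (if a = x then (B : ℤ) + 1 else h' a) < (if b = x then (B : ℤ) + 1 else h' b)
      rcases Finset.mem_insert.mp ha with ha1 | ha'
      · rcases Finset.mem_insert.mp hb with hb1 | hb'
        · exfalso
          have hxx : A x x := by rw [ha1, hb1] at hab; exact hab
          exact hA _ _ hxx hxx
        · exfalso
          have hbs' : b ∈ s' := hS'sub hb'
          have hxb : A x b := by rw [ha1] at hab; exact hab
          exact hbs'.2 (Set.mem_insert_of_mem _ ⟨hbs'.1, hxb⟩)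
      · have hax : a ≠ x := fun h => hxS' (h ▸ ha')
        rcases Finset.mem_insert.mp hb with hb1 | hb'
        · have h1 : ((h' a).natAbs : ℤ) ≤ (B : ℤ) := by
            exact_mod_cast Finset.le_sup (f := fun a => (h' a).natAbs) ha'
          have h2 : h' a ≤ ((h' a).natAbs : ℤ) := Int.le_natAbs
          rw [if_neg hax, if_pos hb1]
          omega
        · have hbx : b ≠ x := fun h => hxS' (h ▸ hb')
          rw [if_neg hax, if_neg hbx]
          exact hh' a ha' b hb' hab
    · rw [Finset.card_insert_of_notMem hxS', Nat.mul_add, Nat.mul_one]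
      have h3 : Out.ncard + 1 ≤ m := by
        have hOm : Out.ncard ≤ m - 1 := hOut
        omega
      have h4 : s.ncard = s'.ncard + Out.ncard + 1 := by omega
      linarith [hcard']
  · -- s' is empty, so s = {x} ∪ Out and s.ncard ≤ m
    have hs'0 : s'.ncard = 0 := by
      rw [Set.not_nonempty_iff_eq_empty.mp hne', Set.ncard_empty]
    have hcnt : s.ncard = Out.ncard + 1 := by omega
    have hsm : s.ncard ≤ m := by omega
    by_cases hlt : s.ncard < m
    · refine ⟨{x}, by simpa using hxs, ⟨fun _ => 0, ?_⟩, ?_⟩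
      · intro a ha b hb hab
        simp only [Finset.mem_singleton] at ha hb
        subst ha; subst hb
        exact absurd hab (hA _ _ hab)
      · simpa using hlt
    · have hseq : s.ncard = m := by omega
      have h2le : 2 ≤ s.ncard := by omega
      have hdiffpos : 0 < (s \ {x}).ncard := by
        rw [Set.ncard_diff_singleton_of_mem hxs]
        omega
      obtain ⟨y, hy⟩ := (Set.ncard_pos (Set.toFinite _)).mp hdiffpos
      have hys : y ∈ s := hy.1
      have hyx : y ≠ x := by
        intro h; exact hy.2 (by simp [h])
      refine ⟨{x, y}, ?_, ?_, ?_⟩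
      · intro z hz
        simp only [Finset.coe_insert, Finset.coe_singleton, Set.mem_insert_iff,
          Set.mem_singleton_iff] at hz
        rcases hz with rfl | rfl
        · exact hxs
        · exact hys
      · refine ⟨if A x y then (fun v => if v = x then 0 else 1)
          else (fun v => if v = x then 1 else 0), ?_⟩
        intro a ha b hb hab
        simp only [Finset.mem_insert, Finset.mem_singleton] at ha hb
        by_cases hxy : A x y
        · rcases ha with rfl | rfl <;> rcases hb with rfl | rfl
          · exact absurd hab (hA _ _ hab)
          · simp [hxy, hyx]
          · exact absurd hxy (hA _ _ hab)
          · exact absurd hab (hA _ _ hab)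
        · rcases ha with rfl | rfl <;> rcases hb with rfl | rfl
          · exact absurd hab (hA _ _ hab)
          · exact absurd hab hxy
          · simp [hxy, hyx]
          · exact absurd hab (hA _ _ hab)
      · have hcard2 : ({x, y} : Finset V).card = 2 := by
          rw [Finset.card_insert_of_notMem (by simpa using hyx.symm),
            Finset.card_singleton]
        rw [hcard2]
        omega

/-- Main construction: every nonempty set in a `(2m-1)`-degenerate oriented graph
contains an acyclically-orderable subset `S` with `|s| < m|S|`. -/
private lemma aux_main (m : ℕ) (hm : 2 ≤ m) :
    ∀ n : ℕ, ∀ A : V → V → Prop, (∀ u v, A u v → ¬ A v u) →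
      Degenerate (SimpleGraph.fromRel A) (2 * m - 1) →
      ∀ s : Set V, s.ncard ≤ n → s.Nonempty →
        ∃ S : Finset V, ↑S ⊆ s ∧ (∃ h : V → ℤ, ∀ a ∈ S, ∀ b ∈ S, A a b → h a < h b) ∧
          s.ncard < m * S.card := by
  intro n
  induction n with
  | zero =>
    intro A hA hdeg s hs hne
    have := (Set.ncard_pos (Set.toFinite s)).mpr hne
    omega
  | succ n ih =>
    intro A hA hdeg s hs hne
    obtain ⟨x, hxs, hxk⟩ := hdeg s hne
    have key : {y | y ∈ s ∧ A x y}.ncard + {y | y ∈ s ∧ A y x}.ncard ≤ 2 * m - 1 := by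
      set Out : Set V := {y | y ∈ s ∧ A x y}
      set In : Set V := {y | y ∈ s ∧ A y x}
      have hd : Disjoint Out In := by
        rw [Set.disjoint_left]
        rintro y ⟨hy, h1⟩ ⟨_, h2⟩
        exact hA _ _ h1 h2
      have hsub : Out ∪ In ⊆ s ∩ (SimpleGraph.fromRel A).neighborSet x := by
        rintro y (⟨hy, h1⟩ | ⟨hy, h1⟩)
        · refine ⟨hy, ?_⟩
          rw [SimpleGraph.mem_neighborSet, SimpleGraph.fromRel_adj]
          exact ⟨fun h => hA x x (h ▸ h1) (h ▸ h1), Or.inl h1⟩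
        · refine ⟨hy, ?_⟩
          rw [SimpleGraph.mem_neighborSet, SimpleGraph.fromRel_adj]
          exact ⟨fun h => hA x x (h ▸ h1) (h ▸ h1), Or.inr h1⟩
      calc Out.ncard + In.ncard = (Out ∪ In).ncard :=
            (Set.ncard_union_eq hd (Set.toFinite _) (Set.toFinite _)).symm
        _ ≤ (s ∩ (SimpleGraph.fromRel A).neighborSet x).ncard :=
            Set.ncard_le_ncard hsub (Set.toFinite _)
        _ ≤ 2 * m - 1 := hxk
    by_cases hside : {y | y ∈ s ∧ A x y}.ncard ≤ m - 1
    · exact aux_step m hm n A hA (ih A hA hdeg) s hs x hxs hside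
    · set A' : V → V → Prop := fun a b => A b a with hA'def
      have hA' : ∀ u v, A' u v → ¬ A' v u := fun u v h h2 => hA v u h h2
      have hgr : SimpleGraph.fromRel A' = SimpleGraph.fromRel A := by
        ext a b
        simp only [SimpleGraph.fromRel_adj, hA'def]
        tauto
      have hdeg' : Degenerate (SimpleGraph.fromRel A') (2 * m - 1) := by
        rw [hgr]; exact hdeg
      have hside' : {y | y ∈ s ∧ A' x y}.ncard ≤ m - 1 := by
        have heq : {y | y ∈ s ∧ A' x y} = {y | y ∈ s ∧ A y x} := rfl
        rw [heq]
        omega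
      obtain ⟨S, hSsub, ⟨h, hh⟩, hc⟩ :=
        aux_step m hm n A' hA' (ih A' hA' hdeg') s hs x hxs hside'
      refine ⟨S, hSsub, ⟨fun v => -(h v), ?_⟩, hc⟩
      intro a ha b hb hab
      have hlt := hh b hb a ha hab
      show -(h a) < -(h b)
      omega

end Aux

theorem stmt6 {V : Type*} [Fintype V] [Nonempty V] (k : ℕ) (hk : 3 ≤ k) (hko : Odd k)
    (A : V → V → Prop) (hA : ∀ u v, A u v → ¬ A v u)
    (hdeg : Degenerate (SimpleGraph.fromRel A) k) :
    (dirFvsNum A : ℚ) < ((k : ℚ) - 1) / ((k : ℚ) + 1) * Fintype.card V := by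
  classical
  obtain ⟨r, hr⟩ := hko
  set m : ℕ := r + 1 with hmdef
  have hm : 2 ≤ m := by omega
  have hk' : k = 2 * m - 1 := by omega
  obtain ⟨S, hSsub, ⟨h, hh⟩, hc⟩ :=
    aux_main m hm (Fintype.card V) A hA (hk' ▸ hdeg) Set.univ
      (by rw [Set.ncard_univ, Nat.card_eq_fintype_card]) Set.univ_nonempty
  have hc' : Fintype.card V < m * S.card := by rwa [Set.ncard_univ, Nat.card_eq_fintype_card] at hc
  have hFVS : DirFVS A ((↑S : Set V)ᶜ) := by
    intro v
    apply aux_no_closed _ h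
    rintro a b ⟨ha, hb, hab⟩
    simp only [Set.mem_compl_iff, not_not, Finset.mem_coe] at ha hb
    exact hh a ha b hb hab
  have hSle : S.card ≤ Fintype.card V := Finset.card_le_univ S
  have hcompl : ((↑S : Set V)ᶜ).ncard = Fintype.card V - S.card := by
    have h1 : (↑S : Set V).ncard + ((↑S : Set V)ᶜ).ncard = Fintype.card V := by
      rw [Set.ncard_add_ncard_compl, Nat.card_eq_fintype_card]
    rw [Set.ncard_coe_finset] at h1
    omega
  have hle : dirFvsNum A ≤ Fintype.card V - S.card := by
    rw [← hcompl]
    exact Nat.sInf_le ⟨_, hFVS, rfl⟩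
  have h1 : (dirFvsNum A : ℚ) ≤ (Fintype.card V : ℚ) - S.card := by
    have := Nat.cast_le (α := ℚ) |>.mpr hle
    rwa [Nat.cast_sub hSle] at this
  refine lt_of_le_of_lt h1 ?_
  have hkq : (k : ℚ) = 2 * m - 1 := by
    rw [hk']
    have : (1 : ℕ) ≤ 2 * m := by omega
    push_cast [Nat.cast_sub this]
    ring
  rw [hkq]
  have hcq : (Fintype.card V : ℚ) < (m : ℚ) * S.card := by exact_mod_cast hc'
  have hmq : (2 : ℚ) ≤ (m : ℚ) := by exact_mod_cast hm
  rw [div_mul_eq_mul_div, lt_div_iff₀ (by linarith)]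
  nlinarith [hcq]
end

section
/- Let G be a maximal k-degenerate finite simple graph with at least k+2 vertices. Then no two vertices of degree exactly k in G are adjacent. -/
/-! The first `k + 1` vertices of a maximal `k`-degenerate ordering form a clique `K`. A vertex
of degree `k` with a later neighbour lies in `K`, and its neighbourhood is then exactly the rest
of `K`. If two adjacent vertices of degree `k` existed, both would lie in `K` with no neighbours
outside it, so the vertex in position `k + 1` would find at most `k - 1` earlier neighbours. -/

/-- A graph is maximal `k`-degenerate iff it admits an elimination ordering in which
every vertex `v` has exactly `min k (φ v)` neighbors preceding it (0-indexed). -/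
def MaxKDegenerate {V : Type*} [Fintype V] (G : SimpleGraph V) (k : ℕ) : Prop :=
  ∃ φ : V ≃ Fin (Fintype.card V),
    ∀ v : V, ({u | G.Adj v u ∧ (φ u : ℕ) < (φ v : ℕ)}).ncard = min k (φ v : ℕ)

theorem Equiv.ncard_setOf_val_lt {V : Type*} {n m : ℕ} (φ : V ≃ Fin n) (hm : m ≤ n) :
    {x | (φ x : ℕ) < m}.ncard = m := by
  have hpre : {x | (φ x : ℕ) < m} = φ ⁻¹' ↑({i | (i : ℕ) < m} : Finset (Fin n)) := by
    ext; simp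
  rw [hpre, Set.ncard_preimage_of_injective_subset_range φ.injective (by simp),
    Set.ncard_coe_finset, Fin.card_filter_val_lt, min_eq_right hm]

namespace SimpleGraph

variable {V : Type*} {n k : ℕ}

def backNeighborSet (G : SimpleGraph V) (φ : V ≃ Fin n) (v : V) : Set V :=
  {u | G.Adj v u ∧ (φ u : ℕ) < φ v}

theorem backNeighborSet_subset_neighborSet (G : SimpleGraph V) (φ : V ≃ Fin n) (v : V) :
    G.backNeighborSet φ v ⊆ G.neighborSet v :=
  fun _ hu ↦ hu.1

/-- The elimination orderings witnessing `MaxKDegenerate`. -/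
def IsMaxDegenerateOrder (G : SimpleGraph V) (k : ℕ) (φ : V ≃ Fin n) : Prop :=
  ∀ v, (G.backNeighborSet φ v).ncard = min k (φ v)

namespace IsMaxDegenerateOrder

variable {G : SimpleGraph V} {φ : V ≃ Fin n}

theorem adj_of_le_of_lt (hφ : G.IsMaxDegenerateOrder k φ) {x y : V} (hx : (φ x : ℕ) ≤ k)
    (hy : (φ y : ℕ) < φ x) : G.Adj x y := by
  have := Finite.of_equiv _ φ.symm
  have hback : G.backNeighborSet φ x = {z | (φ z : ℕ) < φ x} := by
    refine Set.eq_of_subset_of_ncard_le (fun _ hz ↦ hz.2) ?_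
    rw [hφ, φ.ncard_setOf_val_lt (φ x).isLt.le]
    omega
  have hy' : y ∈ G.backNeighborSet φ x := hback ▸ hy
  exact hy'.1

theorem neighborSet_eq_of_ncard_eq (hφ : G.IsMaxDegenerateOrder k φ) (hk : k < n) {z : V}
    (hz : (φ z : ℕ) ≤ k) (hdeg : (G.neighborSet z).ncard = k) :
    G.neighborSet z = {x | (φ x : ℕ) < k + 1} \ {z} := by
  have := Finite.of_equiv _ φ.symm
  refine (Set.eq_of_subset_of_ncard_le ?_ ?_).symm
  · rintro x ⟨hx, hxz : x ≠ z⟩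
    rcases lt_or_gt_of_ne (Fin.val_injective.ne (φ.injective.ne hxz)) with h | h
    · exact hφ.adj_of_le_of_lt hz h
    · exact (hφ.adj_of_le_of_lt (Nat.le_of_lt_succ hx) h).symm
  · have hzK : z ∈ {x | (φ x : ℕ) < k + 1} := Nat.lt_succ_of_le hz
    rw [hdeg, Set.ncard_sdiff_singleton_of_mem hzK, φ.ncard_setOf_val_lt hk]
    omega

theorem lt_of_adj_of_lt (hφ : G.IsMaxDegenerateOrder k φ) {u v : V}
    (hdeg : (G.neighborSet u).ncard = k) (huv : G.Adj u v) (hlt : (φ u : ℕ) < φ v) :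
    (φ u : ℕ) < k := by
  have := Finite.of_equiv _ φ.symm
  by_contra! hku
  -- from position `k` on, the `k` earlier neighbours already exhaust the degree
  have hback : G.backNeighborSet φ u = G.neighborSet u :=
    Set.eq_of_subset_of_ncard_le (G.backNeighborSet_subset_neighborSet φ u)
      (by rw [hφ, hdeg]; omega)
  have hv : v ∈ G.backNeighborSet φ u := hback ▸ huv
  exact hv.2.not_gt hlt

theorem le_of_adj_of_ncard_eq (hφ : G.IsMaxDegenerateOrder k φ) (hk : k < n) {z x : V}
    (hz : (φ z : ℕ) ≤ k) (hdeg : (G.neighborSet z).ncard = k) (hzx : G.Adj z x) :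
    (φ x : ℕ) ≤ k := by
  have hx : x ∈ G.neighborSet z := hzx
  rw [hφ.neighborSet_eq_of_ncard_eq hk hz hdeg] at hx
  exact Nat.le_of_lt_succ hx.1

theorem ncard_neighborSet_ne_of_lt (hφ : G.IsMaxDegenerateOrder k φ) (hn : k + 2 ≤ n)
    {u v : V} (huv : G.Adj u v) (hlt : (φ u : ℕ) < φ v) (hu : (G.neighborSet u).ncard = k) :
    (G.neighborSet v).ncard ≠ k := by
  have := Finite.of_equiv _ φ.symm
  intro hv
  have hku := hφ.lt_of_adj_of_lt hu huv hlt
  have hvk := hφ.le_of_adj_of_ncard_eq (by omega) hku.le hu huv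
  set w := φ.symm ⟨k + 1, by omega⟩
  have hw : (φ w : ℕ) = k + 1 := by simp [w]
  have hsub : G.backNeighborSet φ w ⊆ {x | (φ x : ℕ) < k + 1} \ {u, v} := by
    rintro x ⟨hwx, hx⟩
    refine ⟨by simpa [hw] using hx, ?_⟩
    rintro (rfl | rfl)
    · have := hφ.le_of_adj_of_ncard_eq (by omega) hku.le hu hwx.symm
      omega
    · have := hφ.le_of_adj_of_ncard_eq (by omega) hvk hv hwx.symm
      omega
  have huvK : {u, v} ⊆ {x | (φ x : ℕ) < k + 1} :=
    Set.insert_subset_iff.2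
      ⟨Nat.lt_succ_of_lt hku, Set.singleton_subset_iff.2 (Nat.lt_succ_of_le hvk)⟩
  have hle := Set.ncard_le_ncard hsub
  rw [hφ, hw, Set.ncard_sdiff huvK, φ.ncard_setOf_val_lt (by omega), Set.ncard_pair huv.ne] at hle
  omega

end IsMaxDegenerateOrder

end SimpleGraph

/-- No two adjacent vertices of degree exactly `k` in a maximal `k`-degenerate graph
with at least `k+2` vertices. -/
theorem stmt7 {V : Type*} [Fintype V] (k : ℕ) (G : SimpleGraph V)
    (hG : MaxKDegenerate G k) (hcard : k + 2 ≤ Fintype.card V)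
    (u v : V) (huv : G.Adj u v)
    (hu : (G.neighborSet u).ncard = k) (hv : (G.neighborSet v).ncard = k) :
    False := by
  obtain ⟨φ, hφ⟩ := hG
  replace hφ : G.IsMaxDegenerateOrder k φ := hφ
  rcases lt_trichotomy (φ u : ℕ) (φ v) with h | h | h
  · exact hφ.ncard_neighborSet_ne_of_lt hcard huv h hu hv
  · exact huv.ne (φ.injective (Fin.val_injective h))
  · exact hφ.ncard_neighborSet_ne_of_lt hcard huv.symm h hv hu
end

section
/- Let G be a k-tree with at least k+4 vertices. Then there do not exist two adjacent vertices v and w, both of degree exactly k+1 in G, such that v has a neighbor of degree at most k and w has a neighbor of degree at most k. -/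
/-- A graph is a `k`-tree iff it admits a chordal elimination ordering in which the
earlier neighbors of every vertex `v` form a clique of size exactly `min k (φ v)`
(`φ` is 0-indexed). -/
def IsKTree {V : Type*} [Fintype V] (G : SimpleGraph V) (k : ℕ) : Prop :=
  ∃ φ : V ≃ Fin (Fintype.card V),
    ∀ v : V, G.IsClique {u | G.Adj v u ∧ (φ u : ℕ) < (φ v : ℕ)} ∧
      ({u | G.Adj v u ∧ (φ u : ℕ) < (φ v : ℕ)}).ncard = min k (φ v : ℕ)

section Aux

variable {V : Type*} [Fintype V] {k : ℕ} {G : SimpleGraph V}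

private lemma initseg_ncard (φ : V ≃ Fin (Fintype.card V)) {m : ℕ}
    (hm : m ≤ Fintype.card V) :
    {u : V | (φ u : ℕ) < m}.ncard = m := by
  classical
  rw [← Nat.card_coe_set_eq]
  have e : {u : V | (φ u : ℕ) < m} ≃ Fin m :=
    { toFun := fun u => ⟨(φ u.1 : ℕ), u.2⟩
      invFun := fun j => ⟨φ.symm ⟨j.1, lt_of_lt_of_le j.2 hm⟩, by
        simp only [Set.mem_setOf_eq, Equiv.apply_symm_apply]
        exact j.2⟩
      left_inv := fun u => by
        apply Subtype.ext
        simp only []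
        have : (⟨(φ u.1 : ℕ), lt_of_lt_of_le u.2 hm⟩ : Fin (Fintype.card V)) = φ u.1 := by
          apply Fin.ext; rfl
        rw [this, Equiv.symm_apply_apply]
      right_inv := fun j => by
        apply Fin.ext
        simp only [Equiv.apply_symm_apply] }
  rw [Nat.card_congr e, Nat.card_eq_fintype_card, Fintype.card_fin]

variable (φ : V ≃ Fin (Fintype.card V))
variable (hφ : ∀ v : V, G.IsClique {u | G.Adj v u ∧ (φ u : ℕ) < (φ v : ℕ)} ∧
      ({u | G.Adj v u ∧ (φ u : ℕ) < (φ v : ℕ)}).ncard = min k (φ v : ℕ))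

include hφ

/-- If `y` is among the first `k+1` vertices, it is adjacent to every earlier vertex. -/
private lemma adj_of_lt {x y : V} (h : (φ x : ℕ) < (φ y : ℕ)) (hy : (φ y : ℕ) ≤ k) :
    G.Adj y x := by
  have hsub : {u | G.Adj y u ∧ (φ u : ℕ) < (φ y : ℕ)} ⊆ {u : V | (φ u : ℕ) < (φ y : ℕ)} :=
    fun u hu => hu.2
  have hinit : {u : V | (φ u : ℕ) < (φ y : ℕ)}.ncard = (φ y : ℕ) :=
    initseg_ncard φ (le_of_lt (φ y).2)
  have hcard : {u | G.Adj y u ∧ (φ u : ℕ) < (φ y : ℕ)}.ncard = (φ y : ℕ) := by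
    rw [(hφ y).2, min_eq_right hy]
  have heq : {u | G.Adj y u ∧ (φ u : ℕ) < (φ y : ℕ)} = {u : V | (φ u : ℕ) < (φ y : ℕ)} :=
    Set.eq_of_subset_of_ncard_le hsub (by rw [hinit, hcard]) (Set.toFinite _)
  have : x ∈ {u | G.Adj y u ∧ (φ u : ℕ) < (φ y : ℕ)} := by rw [heq]; exact h
  exact this.1

/-- Any two of the first `k+1` vertices are adjacent. -/
private lemma base_adj {x y : V} (hxy : x ≠ y) (hx : (φ x : ℕ) ≤ k) (hy : (φ y : ℕ) ≤ k) :
    G.Adj x y := by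
  rcases lt_trichotomy ((φ x : ℕ)) ((φ y : ℕ)) with h | h | h
  · exact (adj_of_lt φ hφ h hy).symm
  · exact absurd (φ.injective (Fin.ext h)) hxy
  · exact adj_of_lt φ hφ h hx

/-- The neighborhood of `x` splits into earlier and later neighbors. -/
private lemma deg_split (x : V) :
    (G.neighborSet x).ncard = {u | G.Adj x u ∧ (φ u : ℕ) < (φ x : ℕ)}.ncard +
      {u | G.Adj x u ∧ (φ x : ℕ) < (φ u : ℕ)}.ncard := by
  have hunion : G.neighborSet x = {u | G.Adj x u ∧ (φ u : ℕ) < (φ x : ℕ)} ∪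
      {u | G.Adj x u ∧ (φ x : ℕ) < (φ u : ℕ)} := by
    ext u
    simp only [SimpleGraph.mem_neighborSet, Set.mem_union, Set.mem_setOf_eq]
    constructor
    · intro h
      rcases lt_trichotomy ((φ u : ℕ)) ((φ x : ℕ)) with h' | h' | h'
      · exact Or.inl ⟨h, h'⟩
      · exact absurd (φ.injective (Fin.ext h')) h.ne'
      · exact Or.inr ⟨h, h'⟩
    · rintro (⟨h, _⟩ | ⟨h, _⟩) <;> exact h
  have hdisj : Disjoint {u | G.Adj x u ∧ (φ u : ℕ) < (φ x : ℕ)}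
      {u | G.Adj x u ∧ (φ x : ℕ) < (φ u : ℕ)} := by
    rw [Set.disjoint_left]
    rintro u ⟨_, h1⟩ ⟨_, h2⟩
    omega
  rw [hunion, Set.ncard_union_eq hdisj (Set.toFinite _) (Set.toFinite _)]

/-- A vertex of degree at most `k` has a neighborhood which is a `k`-clique. -/
private lemma simp_struct (hn : k + 1 ≤ Fintype.card V) {x : V}
    (hd : (G.neighborSet x).ncard ≤ k) :
    G.IsClique (G.neighborSet x) ∧ (G.neighborSet x).ncard = k := by
  by_cases hx : k ≤ (φ x : ℕ)
  · have hB : {u | G.Adj x u ∧ (φ u : ℕ) < (φ x : ℕ)}.ncard = k := by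
      rw [(hφ x).2, min_eq_left hx]
    have hsplit := deg_split φ hφ x
    have hF : {u | G.Adj x u ∧ (φ x : ℕ) < (φ u : ℕ)}.ncard = 0 := by omega
    have hFe : {u | G.Adj x u ∧ (φ x : ℕ) < (φ u : ℕ)} = ∅ :=
      (Set.ncard_eq_zero (Set.toFinite _)).mp hF
    have hNB : G.neighborSet x = {u | G.Adj x u ∧ (φ u : ℕ) < (φ x : ℕ)} := by
      ext u
      simp only [SimpleGraph.mem_neighborSet, Set.mem_setOf_eq]
      constructor
      · intro h
        refine ⟨h, ?_⟩
        rcases lt_trichotomy ((φ u : ℕ)) ((φ x : ℕ)) with h' | h' | h'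
        · exact h'
        · exact absurd (φ.injective (Fin.ext h')) h.ne'
        · exact absurd (show u ∈ {u | G.Adj x u ∧ (φ x : ℕ) < (φ u : ℕ)} from ⟨h, h'⟩)
            (by rw [hFe]; exact Set.notMem_empty u)
      · exact fun h => h.1
    rw [hNB]
    exact ⟨(hφ x).1, hB⟩
  · push_neg at hx
    have hxP : x ∈ {u : V | (φ u : ℕ) < k + 1} := by
      simp only [Set.mem_setOf_eq]; omega
    have hPcard : {u : V | (φ u : ℕ) < k + 1}.ncard = k + 1 := initseg_ncard φ hn
    have hsub : {u : V | (φ u : ℕ) < k + 1} \ {x} ⊆ G.neighborSet x := by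
      rintro z ⟨hz1, hz2⟩
      simp only [Set.mem_setOf_eq] at hz1
      exact base_adj φ hφ (fun h => hz2 (Set.mem_singleton_iff.mpr h.symm)) (by omega) (by omega)
    have hsubcard : ({u : V | (φ u : ℕ) < k + 1} \ {x}).ncard = k := by
      rw [Set.ncard_diff_singleton_of_mem hxP, hPcard]; omega
    have heq : {u : V | (φ u : ℕ) < k + 1} \ {x} = G.neighborSet x :=
      Set.eq_of_subset_of_ncard_le hsub (by omega) (Set.toFinite _)
    constructor
    · rw [← heq]
      rintro p ⟨hp1, hp2⟩ q ⟨hq1, hq2⟩ hpq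
      simp only [Set.mem_setOf_eq] at hp1 hq1
      exact base_adj φ hφ hpq (by omega) (by omega)
    · rw [← heq, hsubcard]

/-- Two adjacent vertices have at least `k - 1` common neighbors. -/
private lemma common_ge_aux (hn : k + 1 ≤ Fintype.card V) {x y : V} (hadj : G.Adj x y)
    (hlt : (φ x : ℕ) < (φ y : ℕ)) (hk : 1 ≤ k) :
    k ≤ (G.neighborSet x ∩ G.neighborSet y).ncard + 1 := by
  by_cases hy : (φ y : ℕ) ≤ k
  · -- both among the first k+1 vertices
    have hxP : x ∈ {u : V | (φ u : ℕ) < k + 1} := by simp only [Set.mem_setOf_eq]; omega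
    have hyP : y ∈ {u : V | (φ u : ℕ) < k + 1} := by simp only [Set.mem_setOf_eq]; omega
    have hPcard : {u : V | (φ u : ℕ) < k + 1}.ncard = k + 1 := initseg_ncard φ hn
    have hsub : {u : V | (φ u : ℕ) < k + 1} \ {x, y} ⊆
        G.neighborSet x ∩ G.neighborSet y := by
      rintro z ⟨hz1, hz2⟩
      simp only [Set.mem_setOf_eq] at hz1
      simp only [Set.mem_insert_iff, Set.mem_singleton_iff, not_or] at hz2
      constructor
      · exact base_adj φ hφ (fun h => hz2.1 h.symm) (by omega) (by omega)
      · exact base_adj φ hφ (fun h => hz2.2 h.symm) hy (by omega)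
    have hpair : ({x, y} : Set V) ⊆ {u : V | (φ u : ℕ) < k + 1} := by
      rintro z (rfl | rfl)
      · exact hxP
      · exact hyP
    have hdcard : ({u : V | (φ u : ℕ) < k + 1} \ {x, y}).ncard =
        {u : V | (φ u : ℕ) < k + 1}.ncard - ({x, y} : Set V).ncard :=
      Set.ncard_diff hpair (Set.toFinite _)
    have h2 : ({x, y} : Set V).ncard = 2 := Set.ncard_pair hadj.ne
    have hle := Set.ncard_le_ncard hsub (Set.toFinite _)
    omega
  · push_neg at hy
    have hxB : x ∈ {u | G.Adj y u ∧ (φ u : ℕ) < (φ y : ℕ)} := ⟨hadj.symm, hlt⟩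
    have hBcard : {u | G.Adj y u ∧ (φ u : ℕ) < (φ y : ℕ)}.ncard = k := by
      rw [(hφ y).2, min_eq_left (by omega)]
    have hsub : {u | G.Adj y u ∧ (φ u : ℕ) < (φ y : ℕ)} \ {x} ⊆
        G.neighborSet x ∩ G.neighborSet y := by
      rintro z ⟨hz1, hz2⟩
      exact ⟨(hφ y).1 hxB hz1 (fun h => hz2 (Set.mem_singleton_iff.mpr h.symm)), hz1.1⟩
    have hdcard : ({u | G.Adj y u ∧ (φ u : ℕ) < (φ y : ℕ)} \ {x}).ncard = k - 1 := by
      rw [Set.ncard_diff_singleton_of_mem hxB, hBcard]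
    have hle := Set.ncard_le_ncard hsub (Set.toFinite _)
    omega

private lemma common_ge (hn : k + 1 ≤ Fintype.card V) {x y : V} (hadj : G.Adj x y) :
    k ≤ (G.neighborSet x ∩ G.neighborSet y).ncard + 1 := by
  rcases Nat.eq_zero_or_pos k with hk | hk
  · omega
  rcases lt_trichotomy ((φ x : ℕ)) ((φ y : ℕ)) with h | h | h
  · exact common_ge_aux φ hφ hn hadj h hk
  · exact absurd (φ.injective (Fin.ext h)) hadj.ne
  · rw [Set.inter_comm]
    exact common_ge_aux φ hφ hn hadj.symm h hk

/-- The trapping lemma: if all neighbors of vertices in `X` stay inside `U ⊊ V`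
and `U \ X` has fewer than `k` elements, we get a contradiction. -/
private lemma trapped (X U : Set V)
    (hXU : X ⊆ U) (hne : X.Nonempty) (hNX : ∀ x ∈ X, G.neighborSet x ⊆ U)
    (hex : ∃ c, c ∉ U) (hsmall : (U \ X).ncard + 1 ≤ k) : False := by
  obtain ⟨x₀, hx₀X, hx₀min⟩ :=
    Set.exists_min_image X (fun u => (φ u : ℕ)) (Set.toFinite X) hne
  have hBx₀ : {u | G.Adj x₀ u ∧ (φ u : ℕ) < (φ x₀ : ℕ)} ⊆ U \ X := by
    rintro z ⟨hz1, hz2⟩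
    refine ⟨hNX x₀ hx₀X hz1, fun hzX => ?_⟩
    exact absurd (hx₀min z hzX) (by omega)
  by_cases hx₀ : k ≤ (φ x₀ : ℕ)
  · have hBcard : {u | G.Adj x₀ u ∧ (φ u : ℕ) < (φ x₀ : ℕ)}.ncard = k := by
      rw [(hφ x₀).2, min_eq_left hx₀]
    have := Set.ncard_le_ncard hBx₀ (Set.toFinite _)
    omega
  · push_neg at hx₀
    have hP : ∀ p : V, (φ p : ℕ) ≤ k → p ∈ U := by
      intro p hp
      by_cases hpx : p = x₀
      · exact hpx ▸ hXU hx₀X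
      · exact hNX x₀ hx₀X (base_adj φ hφ (Ne.symm hpx) (by omega) hp)
    obtain ⟨c, hcU, hcmin⟩ :=
      Set.exists_min_image {u : V | u ∉ U} (fun u => (φ u : ℕ)) (Set.toFinite _) hex
    have hck : k ≤ (φ c : ℕ) := by
      by_contra h
      push_neg at h
      exact hcU (hP c (by omega))
    have hBc : {u | G.Adj c u ∧ (φ u : ℕ) < (φ c : ℕ)} ⊆ U \ X := by
      rintro z ⟨hz1, hz2⟩
      constructor
      · by_contra hzU
        exact absurd (hcmin z hzU) (by omega)
      · intro hzX
        exact hcU (hNX z hzX hz1.symm)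
    have hBcard : {u | G.Adj c u ∧ (φ u : ℕ) < (φ c : ℕ)}.ncard = k := by
      rw [(hφ c).2, min_eq_left hck]
    have := Set.ncard_le_ncard hBc (Set.toFinite _)
    omega

end Aux

/-- In a `k`-tree with at least `k+4` vertices there are no two adjacent
`(k+1)`-vertices each of which has a neighbor of degree at most `k`. -/
theorem stmt8 {V : Type*} [Fintype V] (k : ℕ) (G : SimpleGraph V)
    (hG : IsKTree G k) (hcard : k + 4 ≤ Fintype.card V) :
    ¬ ∃ v w : V, G.Adj v w ∧
      (G.neighborSet v).ncard = k + 1 ∧ (G.neighborSet w).ncard = k + 1 ∧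
      (∃ v' : V, G.Adj v v' ∧ (G.neighborSet v').ncard ≤ k) ∧
      (∃ w' : V, G.Adj w w' ∧ (G.neighborSet w').ncard ≤ k) := by
  rintro ⟨v, w, hvw, hdv, hdw, ⟨v', hvv', hdv'⟩, ⟨w', hww', hdw'⟩⟩
  obtain ⟨φ, hφ⟩ := hG
  have hn : k + 1 ≤ Fintype.card V := by omega
  obtain ⟨hQcl0, hQk0⟩ := simp_struct φ hφ hn hdv'
  obtain ⟨hRcl0, hRk0⟩ := simp_struct φ hφ hn hdw'
  have hk1 : 1 ≤ k := by
    rcases Nat.eq_zero_or_pos k with h | h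
    · exfalso
      have hvN : v ∈ G.neighborSet v' := hvv'.symm
      rw [h] at hQk0
      rw [(Set.ncard_eq_zero (Set.toFinite _)).mp hQk0] at hvN
      exact hvN
    · exact h
  set Q : Set V := insert v' (G.neighborSet v') with hQdef
  set R : Set V := insert w' (G.neighborSet w') with hRdef
  have hv'Q : v' ∈ Q := Set.mem_insert _ _
  have hw'R : w' ∈ R := Set.mem_insert _ _
  have hvQ : v ∈ Q := Set.mem_insert_of_mem _ hvv'.symm
  have hwR : w ∈ R := Set.mem_insert_of_mem _ hww'.symm
  have hNv'Q : G.neighborSet v' ⊆ Q := Set.subset_insert _ _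
  have hNw'R : G.neighborSet w' ⊆ R := Set.subset_insert _ _
  have hQadj : ∀ x ∈ Q, ∀ z ∈ Q, x ≠ z → G.Adj x z := by
    intro x hx z hz hne
    rcases hx with rfl | hx
    · rcases hz with rfl | hz
      · exact absurd rfl hne
      · exact hz
    · rcases hz with rfl | hz
      · exact hx.symm
      · exact hQcl0 hx hz hne
  have hRadj : ∀ x ∈ R, ∀ z ∈ R, x ≠ z → G.Adj x z := by
    intro x hx z hz hne
    rcases hx with rfl | hx
    · rcases hz with rfl | hz
      · exact absurd rfl hne
      · exact hz
    · rcases hz with rfl | hz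
      · exact hx.symm
      · exact hRcl0 hx hz hne
  have hQcard : Q.ncard = k + 1 := by
    rw [hQdef, Set.ncard_insert_of_notMem (show v' ∉ G.neighborSet v' from fun h => G.irrefl h) (Set.toFinite _), hQk0]
  have hRcard : R.ncard = k + 1 := by
    rw [hRdef, Set.ncard_insert_of_notMem (show w' ∉ G.neighborSet w' from fun h => G.irrefl h) (Set.toFinite _), hRk0]
  have hQdiff : ∀ x ∈ Q, (Q \ {x}).ncard = k := by
    intro x hx
    rw [Set.ncard_diff_singleton_of_mem hx, hQcard]; omega
  have hRdiff : ∀ x ∈ R, (R \ {x}).ncard = k := by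
    intro x hx
    rw [Set.ncard_diff_singleton_of_mem hx, hRcard]; omega
  have hfullQ : ∀ x ∈ Q, (G.neighborSet x).ncard = k → G.neighborSet x = Q \ {x} := by
    intro x hx hdx
    refine (Set.eq_of_subset_of_ncard_le ?_ ?_ (Set.toFinite _)).symm
    · rintro z ⟨hz1, hz2⟩
      exact hQadj x hx z hz1 (fun h => hz2 (Set.mem_singleton_iff.mpr h.symm))
    · rw [hdx, hQdiff x hx]
  have hfullR : ∀ x ∈ R, (G.neighborSet x).ncard = k → G.neighborSet x = R \ {x} := by
    intro x hx hdx
    refine (Set.eq_of_subset_of_ncard_le ?_ ?_ (Set.toFinite _)).symm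
    · rintro z ⟨hz1, hz2⟩
      exact hRadj x hx z hz1 (fun h => hz2 (Set.mem_singleton_iff.mpr h.symm))
    · rw [hdx, hRdiff x hx]
  -- the unique neighbor of v outside Q
  have hNvQ : Q \ {v} ⊆ G.neighborSet v := by
    rintro z ⟨hz1, hz2⟩
    exact hQadj v hvQ z hz1 (fun h => hz2 (Set.mem_singleton_iff.mpr h.symm))
  have hinterv : G.neighborSet v ∩ Q = Q \ {v} := by
    ext z
    constructor
    · rintro ⟨hz1, hz2⟩
      exact ⟨hz2, fun hzv => G.irrefl ((Set.mem_singleton_iff.mp hzv) ▸ hz1)⟩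
    · intro hz
      exact ⟨hNvQ hz, hz.1⟩
  have hav : (G.neighborSet v \ Q).ncard = 1 := by
    rw [← Set.diff_self_inter, hinterv, Set.ncard_diff hNvQ (Set.toFinite _), hdv,
      hQdiff v hvQ]; omega
  obtain ⟨a, ha⟩ := Set.ncard_eq_one.mp hav
  have haNv : a ∈ G.neighborSet v := by
    have : a ∈ G.neighborSet v \ Q := by rw [ha]; rfl
    exact this.1
  have haQ : a ∉ Q := by
    have : a ∈ G.neighborSet v \ Q := by rw [ha]; rfl
    exact this.2
  have hmemv : ∀ z, z ∈ G.neighborSet v → z ∈ Q ∨ z = a := by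
    intro z hz
    by_cases hzQ : z ∈ Q
    · exact Or.inl hzQ
    · right
      have : z ∈ G.neighborSet v \ Q := ⟨hz, hzQ⟩
      rw [ha] at this
      exact this
  -- the unique neighbor of w outside R
  have hNwR : R \ {w} ⊆ G.neighborSet w := by
    rintro z ⟨hz1, hz2⟩
    exact hRadj w hwR z hz1 (fun h => hz2 (Set.mem_singleton_iff.mpr h.symm))
  have hinterw : G.neighborSet w ∩ R = R \ {w} := by
    ext z
    constructor
    · rintro ⟨hz1, hz2⟩
      exact ⟨hz2, fun hzw => G.irrefl ((Set.mem_singleton_iff.mp hzw) ▸ hz1)⟩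
    · intro hz
      exact ⟨hNwR hz, hz.1⟩
  have hbw : (G.neighborSet w \ R).ncard = 1 := by
    rw [← Set.diff_self_inter, hinterw, Set.ncard_diff hNwR (Set.toFinite _), hdw,
      hRdiff w hwR]; omega
  obtain ⟨b, hb⟩ := Set.ncard_eq_one.mp hbw
  have hbNw : b ∈ G.neighborSet w := by
    have : b ∈ G.neighborSet w \ R := by rw [hb]; rfl
    exact this.1
  have hbR : b ∉ R := by
    have : b ∈ G.neighborSet w \ R := by rw [hb]; rfl
    exact this.2
  have hmemw : ∀ z, z ∈ G.neighborSet w → z ∈ R ∨ z = b := by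
    intro z hz
    by_cases hzR : z ∈ R
    · exact Or.inl hzR
    · right
      have : z ∈ G.neighborSet w \ R := ⟨hz, hzR⟩
      rw [hb] at this
      exact this
  -- distinctness from degrees
  have hvne_w' : v ≠ w' := by
    intro h; rw [h] at hdv; omega
  have hwne_v' : w ≠ v' := by
    intro h; rw [h] at hdw; omega
  have hvnw : v ≠ w := hvw.ne
  -- generic tools
  have hbig : ∀ U : Set V, U.ncard + 1 ≤ Fintype.card V → ∃ c, c ∉ U := by
    intro U hU
    by_contra h
    push_neg at h
    have hUuniv : U = Set.univ := Set.eq_univ_of_forall h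
    rw [hUuniv, Set.ncard_univ, Nat.card_eq_fintype_card] at hU
    omega
  have hX3 : ∀ x y z : V, x ≠ y → x ≠ z → y ≠ z → ({x, y, z} : Set V).ncard = 3 := by
    intro x y z h1 h2 h3
    rw [show ({x, y, z} : Set V) = insert x {y, z} from rfl,
      Set.ncard_insert_of_notMem (by simp [h1, h2]) (Set.toFinite _), Set.ncard_pair h3]
  have hX4 : ∀ x y z t : V, x ≠ y → x ≠ z → x ≠ t → y ≠ z → y ≠ t → z ≠ t →
      ({x, y, z, t} : Set V).ncard = 4 := by
    intro x y z t h1 h2 h3 h4 h5 h6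
    rw [show ({x, y, z, t} : Set V) = insert x {y, z, t} from rfl,
      Set.ncard_insert_of_notMem (by simp [h1, h2, h3]) (Set.toFinite _),
      hX3 y z t h4 h5 h6]
  -- main case analysis
  have hwmem : w ∈ Q ∨ w = a := hmemv w hvw
  have hvmem : v ∈ R ∨ v = b := hmemw v hvw.symm
  rcases hwmem with hwQ | hwa <;> rcases hvmem with hvR | hvb
  · -- Case I : w ∈ Q and v ∈ R
    have hwv' : G.Adj w v' := hQadj w hwQ v' hv'Q hwne_v'
    rcases hmemw v' hwv' with hv'R | hv'b
    · -- v' ∈ R, hence Q = R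
      have hQR : Q = R := by
        have h1 : G.neighborSet v' = R \ {v'} := hfullR v' hv'R hQk0
        rw [hQdef, h1, Set.insert_diff_singleton, Set.insert_eq_self.mpr hv'R]
      by_cases hv'w'eq : v' = w'
      · by_cases hab : a = b
        · -- trapped with X = {v, w, v'}, U = Q ∪ {a}
          have hXQ : ({v, w, v'} : Set V) ⊆ Q := by
            intro z hz
            simp only [Set.mem_insert_iff, Set.mem_singleton_iff] at hz
            rcases hz with rfl | rfl | rfl
            · exact hvQ
            · exact hwQ
            · exact hv'Q
          refine trapped φ hφ {v, w, v'} (Q ∪ {a}) (fun z hz => Or.inl (hXQ hz))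
            ⟨v, by simp⟩ ?_ ?_ ?_
          · intro x hx z hz
            simp only [Set.mem_insert_iff, Set.mem_singleton_iff] at hx
            rcases hx with rfl | rfl | rfl
            · rcases hmemv z hz with h | rfl
              · exact Or.inl h
              · exact Or.inr rfl
            · rcases hmemw z hz with h | rfl
              · exact Or.inl (by rw [hQR]; exact h)
              · exact Or.inr (by rw [hab]; rfl)
            · exact Or.inl (hNv'Q hz)
          · apply hbig
            have h1 := Set.ncard_union_le Q ({a} : Set V)
            rw [hQcard, Set.ncard_singleton] at h1
            omega
          · have hsub : (Q ∪ {a}) \ {v, w, v'} ⊆ (Q \ {v, w, v'}) ∪ {a} := by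
              rintro z ⟨hz1, hz2⟩
              rcases hz1 with hz1 | hz1
              · exact Or.inl ⟨hz1, hz2⟩
              · exact Or.inr hz1
            have h1 := Set.ncard_le_ncard hsub (Set.toFinite _)
            have h2 := Set.ncard_union_le (Q \ ({v, w, v'} : Set V)) ({a} : Set V)
            rw [Set.ncard_singleton] at h2
            have h3 : (Q \ ({v, w, v'} : Set V)).ncard =
                Q.ncard - ({v, w, v'} : Set V).ncard := Set.ncard_diff hXQ (Set.toFinite _)
            have h4 : ({v, w, v'} : Set V).ncard = 3 := hX3 v w v' hvnw hvv'.ne hwne_v'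
            have h5 := Set.ncard_le_ncard hXQ (Set.toFinite _)
            omega
        · -- v' = w', a ≠ b : common neighbor contradiction on the edge v-a
          have hadjva : G.Adj v a := haNv
          have hcom := common_ge φ hφ hn hadjva
          have hXQ : ({v, w, v'} : Set V) ⊆ Q := by
            intro z hz
            simp only [Set.mem_insert_iff, Set.mem_singleton_iff] at hz
            rcases hz with rfl | rfl | rfl
            · exact hvQ
            · exact hwQ
            · exact hv'Q
          have hsub : G.neighborSet v ∩ G.neighborSet a ⊆ Q \ {v, w, v'} := by
            rintro z ⟨hz1, hz2⟩
            rcases hmemv z hz1 with hzQ | rfl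
            · refine ⟨hzQ, ?_⟩
              simp only [Set.mem_insert_iff, Set.mem_singleton_iff]
              push_neg
              refine ⟨?_, ?_, ?_⟩
              · rintro rfl; exact G.irrefl hz1
              · rintro rfl
                rcases hmemw a hz2.symm with h | h
                · exact haQ (by rw [hQR]; exact h)
                · exact hab h
              · rintro rfl
                exact haQ (hNv'Q hz2.symm)
            · exact absurd hz2 (fun h => G.irrefl h)
          have h1 := Set.ncard_le_ncard hsub (Set.toFinite _)
          have h3 : (Q \ ({v, w, v'} : Set V)).ncard =
              Q.ncard - ({v, w, v'} : Set V).ncard := Set.ncard_diff hXQ (Set.toFinite _)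
          have h4 : ({v, w, v'} : Set V).ncard = 3 := hX3 v w v' hvnw hvv'.ne hwne_v'
          have h5 := Set.ncard_le_ncard hXQ (Set.toFinite _)
          omega
      · -- v' ≠ w' : trapped with X = {v, w, v', w'}, U = Q ∪ {a, b}
        have hw'Q : w' ∈ Q := by rw [hQR]; exact hw'R
        have hXQ : ({v, w, v', w'} : Set V) ⊆ Q := by
          intro z hz
          simp only [Set.mem_insert_iff, Set.mem_singleton_iff] at hz
          rcases hz with rfl | rfl | rfl | rfl
          · exact hvQ
          · exact hwQ
          · exact hv'Q
          · exact hw'Q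
        refine trapped φ hφ {v, w, v', w'} (Q ∪ {a, b}) (fun z hz => Or.inl (hXQ hz))
          ⟨v, by simp⟩ ?_ ?_ ?_
        · intro x hx z hz
          simp only [Set.mem_insert_iff, Set.mem_singleton_iff] at hx
          rcases hx with rfl | rfl | rfl | rfl
          · rcases hmemv z hz with h | rfl
            · exact Or.inl h
            · exact Or.inr (Or.inl rfl)
          · rcases hmemw z hz with h | rfl
            · exact Or.inl (by rw [hQR]; exact h)
            · exact Or.inr (Or.inr rfl)
          · exact Or.inl (hNv'Q hz)
          · exact Or.inl (by rw [hQR]; exact hNw'R hz)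
        · apply hbig
          have h1 := Set.ncard_union_le Q ({a, b} : Set V)
          have h2 := Set.ncard_insert_le a ({b} : Set V)
          rw [hQcard] at h1
          rw [Set.ncard_singleton] at h2
          omega
        · have hsub : (Q ∪ {a, b}) \ {v, w, v', w'} ⊆
              (Q \ {v, w, v', w'}) ∪ {a, b} := by
            rintro z ⟨hz1, hz2⟩
            rcases hz1 with hz1 | hz1
            · exact Or.inl ⟨hz1, hz2⟩
            · exact Or.inr hz1
          have h1 := Set.ncard_le_ncard hsub (Set.toFinite _)
          have h2 := Set.ncard_union_le (Q \ ({v, w, v', w'} : Set V)) ({a, b} : Set V)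
          have h2' := Set.ncard_insert_le a ({b} : Set V)
          rw [Set.ncard_singleton] at h2'
          have h3 : (Q \ ({v, w, v', w'} : Set V)).ncard =
              Q.ncard - ({v, w, v', w'} : Set V).ncard := Set.ncard_diff hXQ (Set.toFinite _)
          have h4 : ({v, w, v', w'} : Set V).ncard = 4 :=
            hX4 v w v' w' hvnw hvv'.ne hvne_w' hwne_v' hww'.ne hv'w'eq
          have h5 := Set.ncard_le_ncard hXQ (Set.toFinite _)
          omega
    · -- v' = b, hence v' ∉ R and w' = a
      have hv'nR : v' ∉ R := by rw [hv'b]; exact hbR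
      have hadjvw' : G.Adj v w' := hRadj v hvR w' hw'R hvne_w'
      have hv'w'ne : v' ≠ w' := by rintro rfl; exact hv'nR hw'R
      rcases hmemv w' hadjvw' with hw'Q | hw'a
      · exact hv'nR (hNw'R (hQadj w' hw'Q v' hv'Q hv'w'ne.symm))
      · -- trapped with X = {v, w, v', w'}, U = Q ∪ {w'}
        have hRsub : R ⊆ Q ∪ {w'} := by
          intro z hz
          by_cases hzv : z = v
          · exact Or.inl (hzv ▸ hvQ)
          · rcases hmemv z (hRadj v hvR z hz (fun h => hzv h.symm)) with h | rfl
            · exact Or.inl h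
            · exact Or.inr (by rw [hw'a]; rfl)
        have hwQ2 : w ∈ Q := by
          rcases hRsub hwR with h | h
          · exact h
          · exact absurd (Set.mem_singleton_iff.mp h) hww'.ne
        refine trapped φ hφ {v, w, v', w'} (Q ∪ {w'}) ?_ ⟨v, by simp⟩ ?_ ?_ ?_
        · intro z hz
          simp only [Set.mem_insert_iff, Set.mem_singleton_iff] at hz
          rcases hz with rfl | rfl | rfl | rfl
          · exact Or.inl hvQ
          · exact Or.inl hwQ2
          · exact Or.inl hv'Q
          · exact Or.inr rfl
        · intro x hx z hz
          simp only [Set.mem_insert_iff, Set.mem_singleton_iff] at hx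
          rcases hx with rfl | rfl | rfl | rfl
          · rcases hmemv z hz with h | rfl
            · exact Or.inl h
            · exact Or.inr (by rw [hw'a]; rfl)
          · rcases hmemw z hz with h | rfl
            · exact hRsub h
            · exact Or.inl (by rw [← hv'b]; exact hv'Q)
          · exact Or.inl (hNv'Q hz)
          · exact hRsub (hNw'R hz)
        · apply hbig
          have h1 := Set.ncard_union_le Q ({w'} : Set V)
          rw [hQcard, Set.ncard_singleton] at h1
          omega
        · have hXQ : ({v, w, v'} : Set V) ⊆ Q := by
            intro z hz
            simp only [Set.mem_insert_iff, Set.mem_singleton_iff] at hz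
            rcases hz with rfl | rfl | rfl
            · exact hvQ
            · exact hwQ2
            · exact hv'Q
          have hsub : (Q ∪ {w'}) \ {v, w, v', w'} ⊆ Q \ {v, w, v'} := by
            rintro z ⟨hz1, hz2⟩
            simp only [Set.mem_insert_iff, Set.mem_singleton_iff, not_or] at hz2
            rcases hz1 with hz1 | hz1
            · refine ⟨hz1, ?_⟩
              simp only [Set.mem_insert_iff, Set.mem_singleton_iff, not_or]
              exact ⟨hz2.1, hz2.2.1, hz2.2.2.1⟩
            · exact absurd (Set.mem_singleton_iff.mp hz1) hz2.2.2.2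
          have h1 := Set.ncard_le_ncard hsub (Set.toFinite _)
          have h3 : (Q \ ({v, w, v'} : Set V)).ncard =
              Q.ncard - ({v, w, v'} : Set V).ncard := Set.ncard_diff hXQ (Set.toFinite _)
          have h4 : ({v, w, v'} : Set V).ncard = 3 := hX3 v w v' hvnw hvv'.ne hwne_v'
          have h5 := Set.ncard_le_ncard hXQ (Set.toFinite _)
          omega
  · -- Case : w ∈ Q and v = b
    have hwv' : G.Adj w v' := hQadj w hwQ v' hv'Q hwne_v'
    rcases hmemw v' hwv' with hv'R | hv'b
    · have hQR : Q = R := by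
        have h1 : G.neighborSet v' = R \ {v'} := hfullR v' hv'R hQk0
        rw [hQdef, h1, Set.insert_diff_singleton, Set.insert_eq_self.mpr hv'R]
      have hvR2 : v ∈ R := by rw [← hQR]; exact hvQ
      rw [hvb] at hvR2
      exact hbR hvR2
    · exact hvv'.ne (hvb.trans hv'b.symm)
  · -- Case : w = a and v ∈ R
    have hadjvw' : G.Adj v w' := hRadj v hvR w' hw'R hvne_w'
    rcases hmemv w' hadjvw' with hw'Q | hw'a
    · have hRQ : R = Q := by
        have h1 : G.neighborSet w' = Q \ {w'} := hfullQ w' hw'Q hRk0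
        rw [hRdef, h1, Set.insert_diff_singleton, Set.insert_eq_self.mpr hw'Q]
      have hwQ2 : w ∈ Q := by rw [← hRQ]; exact hwR
      rw [hwa] at hwQ2
      exact haQ hwQ2
    · exact hww'.ne (hwa.trans hw'a.symm)
  · -- Case : w = a and v = b
    have hcom := common_ge φ hφ hn hvw
    have hsub : G.neighborSet v ∩ G.neighborSet w ⊆ Q ∩ R := by
      rintro z ⟨hz1, hz2⟩
      constructor
      · rcases hmemv z hz1 with h | rfl
        · exact h
        · exact absurd (show G.Adj w w from by rw [← hwa] at hz2; exact hz2) (G.irrefl)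
      · rcases hmemw z hz2 with h | rfl
        · exact h
        · exact absurd (show G.Adj v v from by rw [← hvb] at hz1; exact hz1) (G.irrefl)
    have h1 := Set.ncard_le_ncard hsub (Set.toFinite _)
    have h2 := Set.ncard_union_add_ncard_inter Q R (Set.toFinite _) (Set.toFinite _)
    have hv'w'ne : v' ≠ w' := by
      rintro rfl
      have hQReq : Q = R := by rw [hQdef, hRdef]
      have hvR2 : v ∈ R := by rw [← hQReq]; exact hvQ
      rw [hvb] at hvR2
      exact hbR hvR2
    have hXU : ({v, w, v', w'} : Set V) ⊆ Q ∪ R := by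
      intro z hz
      simp only [Set.mem_insert_iff, Set.mem_singleton_iff] at hz
      rcases hz with rfl | rfl | rfl | rfl
      · exact Or.inl hvQ
      · exact Or.inr hwR
      · exact Or.inl hv'Q
      · exact Or.inr hw'R
    refine trapped φ hφ {v, w, v', w'} (Q ∪ R) hXU ⟨v, by simp⟩ ?_ ?_ ?_
    · intro x hx z hz
      simp only [Set.mem_insert_iff, Set.mem_singleton_iff] at hx
      rcases hx with rfl | rfl | rfl | rfl
      · rcases hmemv z hz with h | rfl
        · exact Or.inl h
        · exact Or.inr (by rw [← hwa]; exact hwR)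
      · rcases hmemw z hz with h | rfl
        · exact Or.inr h
        · exact Or.inl (by rw [← hvb]; exact hvQ)
      · exact Or.inl (hNv'Q hz)
      · exact Or.inr (hNw'R hz)
    · apply hbig
      omega
    · have h4 : ({v, w, v', w'} : Set V).ncard = 4 :=
        hX4 v w v' w' hvnw hvv'.ne hvne_w' hwne_v' hww'.ne hv'w'ne
      have h3 : ((Q ∪ R) \ ({v, w, v', w'} : Set V)).ncard =
          (Q ∪ R).ncard - ({v, w, v', w'} : Set V).ncard :=
        Set.ncard_diff hXU (Set.toFinite _)
      omega
end

section
/- Let D be a finite oriented graph and let R be a minimal bad set of D. Let D' be the oriented graph obtained from D by adding two new vertices r₁ and r₂ together with the arc (r₁, r₂) and, for every v ∈ R, the arcs (v, r₁) and (r₂, v). Then n(D') = n(D) + 2, f(D') = f(D) + 1, and {r₁, r₂} is a minimal bad set of D'. -/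
/-- A minimum feedback vertex set. -/
def IsMinFVS {V : Type*} [Fintype V] (A : V → V → Prop) (F : Set V) : Prop :=
  DirFVS A F ∧ F.ncard = dirFvsNum A

/-- A set is bad if it is contained in no minimum feedback vertex set. -/
def BadSet {V : Type*} [Fintype V] (A : V → V → Prop) (R : Set V) : Prop :=
  ∀ F : Set V, IsMinFVS A F → ¬ R ⊆ F

/-- A bad set is minimal if for every `r ∈ R` there is a minimum feedback vertex
set `F` with `R \ F = {r}` (equivalently, every proper subset of `R` lies in some
minimum feedback vertex set). -/
def MinimalBadSet {V : Type*} [Fintype V] (A : V → V → Prop) (R : Set V) : Prop :=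
  BadSet A R ∧ ∀ r ∈ R, ∃ F : Set V, IsMinFVS A F ∧ R \ F = {r}

/-- The digraph `D'` obtained from `D = (V, A)` by adding two vertices `r₁ = Sum.inr 0`
and `r₂ = Sum.inr 1`, together with the arc `(r₁, r₂)` and, for every `v ∈ R`, the
arcs `(v, r₁)` and `(r₂, v)`. -/
def extendArcs {V : Type*} (A : V → V → Prop) (R : Set V) :
    (V ⊕ Fin 2) → (V ⊕ Fin 2) → Prop
  | Sum.inl u, Sum.inl v => A u v
  | Sum.inl v, Sum.inr i => i = 0 ∧ v ∈ R
  | Sum.inr i, Sum.inl v => i = 1 ∧ v ∈ R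
  | Sum.inr i, Sum.inr j => i = 0 ∧ j = 1

open Relation Set

lemma dirFVS_univ {V : Type*} (A : V → V → Prop) : DirFVS A (Set.univ : Set V) := by
  intro v h
  cases h with
  | single h => exact h.1 (mem_univ _)
  | tail _ h => exact h.1 (mem_univ _)

lemma exists_minFVS {V : Type*} [Fintype V] (A : V → V → Prop) :
    ∃ F : Set V, IsMinFVS A F := by
  have hne : {n | ∃ F : Set V, DirFVS A F ∧ F.ncard = n}.Nonempty :=
    ⟨(Set.univ : Set V).ncard, Set.univ, dirFVS_univ A, rfl⟩
  obtain ⟨F, hF, hcard⟩ := Nat.sInf_mem hne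
  exact ⟨F, hF, hcard⟩

lemma dirFvsNum_le {V : Type*} [Fintype V] {A : V → V → Prop} {F : Set V}
    (hF : DirFVS A F) : dirFvsNum A ≤ F.ncard :=
  Nat.sInf_le ⟨F, hF, rfl⟩

lemma restrict_fvs {V : Type*} {A : V → V → Prop} {R : Set V} {F' : Set (V ⊕ Fin 2)}
    (hF' : DirFVS (extendArcs A R) F') : DirFVS A (Sum.inl ⁻¹' F') := by
  intro v hv
  exact hF' (Sum.inl v) (hv.lift Sum.inl (fun a b h => ⟨h.1, h.2.1, h.2.2⟩))

/-- Adding `r₁ = inr 0` to an FVS of `A` gives an FVS of the extension. -/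
lemma extend_fvs_r1 {V : Type*} {A : V → V → Prop} {R : Set V} {F : Set V}
    (hF : DirFVS A F) :
    DirFVS (extendArcs A R) (Sum.inl '' F ∪ ({Sum.inr 0} : Set (V ⊕ Fin 2))) := by
  set F' : Set (V ⊕ Fin 2) := Sum.inl '' F ∪ {Sum.inr 0} with hF'def
  set s : (V ⊕ Fin 2) → (V ⊕ Fin 2) → Prop :=
    fun x y => x ∉ F' ∧ y ∉ F' ∧ extendArcs A R x y with hs
  have step1 : ∀ a y, s (Sum.inl a) y →
      ∃ b, y = Sum.inl b ∧ (a ∉ F ∧ b ∉ F ∧ A a b) := by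
    rintro a (b | i) ⟨hx, hy, harc⟩
    · exact ⟨b, rfl, fun h => hx (Or.inl ⟨a, h, rfl⟩), fun h => hy (Or.inl ⟨b, h, rfl⟩), harc⟩
    · obtain ⟨hi, -⟩ := harc
      subst hi
      exact absurd (Or.inr rfl) hy
  have noend1 : ∀ x, ¬ s x (Sum.inr 1) := by
    rintro (a | i) ⟨hx, hy, harc⟩
    · exact absurd harc.1 (by decide)
    · exact hx (Or.inr (show Sum.inr i = Sum.inr 0 by rw [harc.1]))
  have climb : ∀ a y, TransGen s (Sum.inl a) y →
      ∃ b, y = Sum.inl b ∧ TransGen (fun x y => x ∉ F ∧ y ∉ F ∧ A x y) a b := by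
    intro a y hy
    induction hy with
    | single h =>
        obtain ⟨b, rfl, hstep⟩ := step1 _ _ h
        exact ⟨b, rfl, .single hstep⟩
    | tail _ h ih =>
        obtain ⟨b, rfl, hab⟩ := ih
        obtain ⟨c, rfl, hstep⟩ := step1 _ _ h
        exact ⟨c, rfl, hab.tail hstep⟩
  rintro (a | i) hw
  · obtain ⟨b, hb, hcyc⟩ := climb a _ hw
    rw [Sum.inl.injEq] at hb
    subst hb
    exact hF a hcyc
  · obtain ⟨c, -, hcw⟩ := TransGen.tail'_iff.mp hw
    have hi : i = 0 ∨ i = 1 := by omega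
    rcases hi with rfl | rfl
    · exact hcw.2.1 (Or.inr rfl)
    · exact noend1 _ hcw

/-- Adding `r₂ = inr 1` to an FVS of `A` gives an FVS of the extension. -/
lemma extend_fvs_r2 {V : Type*} {A : V → V → Prop} {R : Set V} {F : Set V}
    (hF : DirFVS A F) :
    DirFVS (extendArcs A R) (Sum.inl '' F ∪ ({Sum.inr 1} : Set (V ⊕ Fin 2))) := by
  set F' : Set (V ⊕ Fin 2) := Sum.inl '' F ∪ {Sum.inr 1} with hF'def
  set s : (V ⊕ Fin 2) → (V ⊕ Fin 2) → Prop :=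
    fun x y => x ∉ F' ∧ y ∉ F' ∧ extendArcs A R x y with hs
  have step1 : ∀ a y, s (Sum.inl a) y →
      (∃ b, y = Sum.inl b ∧ (a ∉ F ∧ b ∉ F ∧ A a b)) ∨ y = Sum.inr 0 := by
    rintro a (b | i) ⟨hx, hy, harc⟩
    · exact Or.inl ⟨b, rfl, fun h => hx (Or.inl ⟨a, h, rfl⟩),
        fun h => hy (Or.inl ⟨b, h, rfl⟩), harc⟩
    · exact Or.inr (by rw [harc.1])
  have nostep0 : ∀ y, ¬ s (Sum.inr 0) y := by
    rintro (b | i) ⟨hx, hy, harc⟩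
    · exact absurd harc.1 (by decide)
    · exact hy (Or.inr (show Sum.inr i = Sum.inr 1 by rw [harc.2]))
  have climb : ∀ a y, TransGen s (Sum.inl a) y →
      y = Sum.inr 0 ∨ ∃ b, y = Sum.inl b ∧ TransGen (fun x y => x ∉ F ∧ y ∉ F ∧ A x y) a b := by
    intro a y hy
    induction hy with
    | single h =>
        rcases step1 _ _ h with ⟨b, rfl, hstep⟩ | rfl
        · exact Or.inr ⟨b, rfl, .single hstep⟩
        · exact Or.inl rfl
    | tail _ h ih =>
        rcases ih with rfl | ⟨b, rfl, hab⟩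
        · exact absurd h (nostep0 _)
        · rcases step1 _ _ h with ⟨c, rfl, hstep⟩ | rfl
          · exact Or.inr ⟨c, rfl, hab.tail hstep⟩
          · exact Or.inl rfl
  rintro (a | i) hw
  · rcases climb a _ hw with h | ⟨b, hb, hcyc⟩
    · exact Sum.inl_ne_inr h
    · rw [Sum.inl.injEq] at hb
      subst hb
      exact hF a hcyc
  · obtain ⟨c, hwc, -⟩ := TransGen.head'_iff.mp hw
    have hi : i = 0 ∨ i = 1 := by omega
    rcases hi with rfl | rfl
    · exact nostep0 _ hwc
    · exact hwc.1 (Or.inr rfl)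

/-- If an FVS of the extension misses `r₁, r₂` and some `v ∈ R`, there is a cycle. -/
lemma extend_cycle {V : Type*} {A : V → V → Prop} {R : Set V} {F' : Set (V ⊕ Fin 2)}
    (h0 : Sum.inr 0 ∉ F') (h1 : Sum.inr 1 ∉ F') {v : V} (hvR : v ∈ R)
    (hv : Sum.inl v ∉ F') :
    Relation.TransGen (fun x y => x ∉ F' ∧ y ∉ F' ∧ extendArcs A R x y)
      (Sum.inl v) (Sum.inl v) :=
  .head ⟨hv, h0, rfl, hvR⟩ (.head ⟨h0, h1, rfl, rfl⟩ (.single ⟨h1, hv, rfl, hvR⟩))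

theorem stmt15 {V : Type*} [Fintype V] (A : V → V → Prop)
    (hA : ∀ u v, A u v → ¬ A v u) (R : Set V) (hR : MinimalBadSet A R) :
    Fintype.card (V ⊕ Fin 2) = Fintype.card V + 2 ∧
    dirFvsNum (extendArcs A R) = dirFvsNum A + 1 ∧
    MinimalBadSet (extendArcs A R) {Sum.inr 0, Sum.inr 1} := by
  obtain ⟨hbad, hmin⟩ := hR
  obtain ⟨F, hFfvs, hFcard⟩ := exists_minFVS A
  have hinj : Function.Injective (Sum.inl : V → V ⊕ Fin 2) := Sum.inl_injective
  have hnum : dirFvsNum (extendArcs A R) = dirFvsNum A + 1 := by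
    apply le_antisymm
    · calc dirFvsNum (extendArcs A R)
          ≤ (Sum.inl '' F ∪ ({Sum.inr 0} : Set (V ⊕ Fin 2))).ncard :=
            dirFvsNum_le (extend_fvs_r1 hFfvs)
        _ = dirFvsNum A + 1 := by
            rw [union_singleton, ncard_insert_of_notMem (by simp),
              ncard_image_of_injective _ hinj, hFcard]
    · obtain ⟨F', hF'fvs, hF'card⟩ := exists_minFVS (extendArcs A R)
      rw [← hF'card]
      have hPfvs : DirFVS A (Sum.inl ⁻¹' F') := restrict_fvs hF'fvs
      have hPle : dirFvsNum A ≤ (Sum.inl ⁻¹' F').ncard := dirFvsNum_le hPfvs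
      have himg : (Sum.inl '' (Sum.inl ⁻¹' F') : Set (V ⊕ Fin 2)) ⊆ F' := by
        rintro _ ⟨a, ha, rfl⟩; exact ha
      by_cases h0 : Sum.inr 0 ∈ F'
      · have hsub : insert (Sum.inr 0) (Sum.inl '' (Sum.inl ⁻¹' F')) ⊆ F' :=
          insert_subset h0 himg
        have hle := Set.ncard_le_ncard hsub (Set.toFinite _)
        rw [ncard_insert_of_notMem (by simp), ncard_image_of_injective _ hinj] at hle
        omega
      · by_cases h1 : Sum.inr 1 ∈ F'
        · have hsub : insert (Sum.inr 1) (Sum.inl '' (Sum.inl ⁻¹' F')) ⊆ F' :=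
            insert_subset h1 himg
          have hle := Set.ncard_le_ncard hsub (Set.toFinite _)
          rw [ncard_insert_of_notMem (by simp), ncard_image_of_injective _ hinj] at hle
          omega
        · have hRsub : R ⊆ Sum.inl ⁻¹' F' := by
            intro v hvR
            by_contra hv
            exact hF'fvs (Sum.inl v) (extend_cycle h0 h1 hvR hv)
          have hF'eq : F' = Sum.inl '' (Sum.inl ⁻¹' F') := by
            refine Subset.antisymm ?_ himg
            rintro (a | i) hx
            · exact ⟨a, hx, rfl⟩
            · have hi : i = 0 ∨ i = 1 := by omega
              rcases hi with rfl | rfl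
              · exact absurd hx h0
              · exact absurd hx h1
          have hcard2 : F'.ncard = (Sum.inl ⁻¹' F').ncard := by
            conv_lhs => rw [hF'eq, ncard_image_of_injective _ hinj]
          have hne : (Sum.inl ⁻¹' F').ncard ≠ dirFvsNum A :=
            fun h => hbad _ ⟨hPfvs, h⟩ hRsub
          omega
  refine ⟨by simp, hnum, ?_, ?_⟩
  · -- BadSet
    rintro F' ⟨hfvs, hcard⟩ hsub
    have hPfvs : DirFVS A (Sum.inl ⁻¹' F') := restrict_fvs hfvs
    have hPle : dirFvsNum A ≤ (Sum.inl ⁻¹' F').ncard := dirFvsNum_le hPfvs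
    have h0 : Sum.inr 0 ∈ F' := hsub (Or.inl rfl)
    have h1 : Sum.inr 1 ∈ F' := hsub (Or.inr rfl)
    have himg : (Sum.inl '' (Sum.inl ⁻¹' F') : Set (V ⊕ Fin 2)) ⊆ F' := by
      rintro _ ⟨a, ha, rfl⟩; exact ha
    have hsub2 : insert (Sum.inr 0) (insert (Sum.inr 1) (Sum.inl '' (Sum.inl ⁻¹' F'))) ⊆ F' :=
      insert_subset h0 (insert_subset h1 himg)
    have hle := Set.ncard_le_ncard hsub2 (Set.toFinite _)
    rw [ncard_insert_of_notMem (by simp), ncard_insert_of_notMem (by simp),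
      ncard_image_of_injective _ hinj] at hle
    rw [hnum] at hcard
    omega
  · -- minimality
    rintro r hr
    have hcard1 : (Sum.inl '' F ∪ ({Sum.inr 1} : Set (V ⊕ Fin 2))).ncard
        = dirFvsNum (extendArcs A R) := by
      rw [union_singleton, ncard_insert_of_notMem (by simp),
        ncard_image_of_injective _ hinj, hFcard, hnum]
    have hcard0 : (Sum.inl '' F ∪ ({Sum.inr 0} : Set (V ⊕ Fin 2))).ncard
        = dirFvsNum (extendArcs A R) := by
      rw [union_singleton, ncard_insert_of_notMem (by simp),
        ncard_image_of_injective _ hinj, hFcard, hnum]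
    rcases hr with rfl | rfl
    · refine ⟨Sum.inl '' F ∪ {Sum.inr 1}, ⟨extend_fvs_r2 hFfvs, hcard1⟩, ?_⟩
      ext x
      simp only [mem_diff, mem_insert_iff, mem_singleton_iff, mem_union, mem_image]
      constructor
      · rintro ⟨(rfl | rfl), hx⟩
        · rfl
        · exact absurd (Or.inr rfl) hx
      · rintro rfl
        exact ⟨Or.inl rfl, by simp⟩
    · refine ⟨Sum.inl '' F ∪ {Sum.inr 0}, ⟨extend_fvs_r1 hFfvs, hcard0⟩, ?_⟩
      ext x
      simp only [mem_diff, mem_insert_iff, mem_singleton_iff, mem_union, mem_image]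
      constructor
      · rintro ⟨(rfl | rfl), hx⟩
        · exact absurd (Or.inr rfl) hx
        · rfl
      · rintro rfl
        exact ⟨Or.inr rfl, by simp⟩
end
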